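/- arXiv:2605.12812 — 9 statements merged into one kernel-verified Lean document; each statement's English description precedes it below -/
import Mathlib

section
/- Let X be a nonempty set and let Z be a nonempty finite set of nonzero vectors in {0,1}^X ⊆ ℝ^X that is linearly dependent over ℝ. Put p = |Z| − 1 and let a(p) denote the maximum of |det M| over all p×p matrices M with entries in {0,1} (with a(0) = 1). Then there exist integers (Δ_w)_{w∈Z}, not all zero, such that |Δ_w| ≤ a(p) for every w ∈ Z and ∑_{w∈Z} Δ_w · w = 0. -/
/-- `a(p)`: the maximal value of `|det M|` over `p × p` matrices `M` with entries
in `{0,1}` (for `p = 0` the empty matrix has determinant `1`, so `a(0) = 1`). -/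
noncomputable def maxBinDet (p : ℕ) : ℝ :=
  sSup {v : ℝ | ∃ M : Matrix (Fin p) (Fin p) ℝ,
    (∀ i j, M i j = 0 ∨ M i j = 1) ∧ v = |M.det|}

open Module Submodule Matrix

lemma binDet_bddAbove (p : ℕ) : BddAbove {v : ℝ | ∃ M : Matrix (Fin p) (Fin p) ℝ,
    (∀ i j, M i j = 0 ∨ M i j = 1) ∧ v = |M.det|} := by
  refine ⟨(p.factorial : ℝ), ?_⟩
  rintro v ⟨M, hM, rfl⟩
  rw [Matrix.det_apply]
  calc |∑ σ : Equiv.Perm (Fin p), Equiv.Perm.sign σ • ∏ i, M (σ i) i|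
      ≤ ∑ σ : Equiv.Perm (Fin p), |Equiv.Perm.sign σ • ∏ i, M (σ i) i| :=
        Finset.abs_sum_le_sum_abs _ _
    _ ≤ ∑ _σ : Equiv.Perm (Fin p), 1 := by
        refine Finset.sum_le_sum fun σ _ => ?_
        have h1 : |(∏ i, M (σ i) i : ℝ)| ≤ 1 := by
          rw [Finset.abs_prod]
          refine Finset.prod_le_one (fun i _ => abs_nonneg _) (fun i _ => ?_)
          rcases hM (σ i) i with h | h <;> simp [h]
        rcases Int.units_eq_one_or (Equiv.Perm.sign σ) with h | h <;>
          simp [h, abs_neg] <;> linarith [abs_nonneg (∏ i, M (σ i) i)]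
    _ = (Fintype.card (Equiv.Perm (Fin p)) : ℝ) := by simp
    _ = (p.factorial : ℝ) := by rw [Fintype.card_perm, Fintype.card_fin]

lemma le_maxBinDet {p : ℕ} (M : Matrix (Fin p) (Fin p) ℝ)
    (hM : ∀ i j, M i j = 0 ∨ M i j = 1) : |M.det| ≤ maxBinDet p :=
  le_csSup (binDet_bddAbove p) ⟨M, hM, rfl⟩

lemma maxBinDet_nonneg (p : ℕ) : 0 ≤ maxBinDet p := by
  have h := le_maxBinDet (1 : Matrix (Fin p) (Fin p) ℝ) (fun i j => by
    by_cases h : i = j <;> simp [Matrix.one_apply, h])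
  exact le_trans (abs_nonneg _) h

lemma abs_det_le_maxBinDet {n p : ℕ} (hnp : n ≤ p) (M : Matrix (Fin n) (Fin n) ℝ)
    (hM : ∀ i j, M i j = 0 ∨ M i j = 1) : |M.det| ≤ maxBinDet p := by
  have hpq : n + (p - n) = p := by omega
  let e : Fin n ⊕ Fin (p - n) ≃ Fin p := finSumFinEquiv.trans (finCongr hpq)
  let M' : Matrix (Fin p) (Fin p) ℝ :=
    (Matrix.fromBlocks M 0 0 (1 : Matrix (Fin (p - n)) (Fin (p - n)) ℝ)).submatrix e.symm e.symm
  have hdet : M'.det = M.det := by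
    rw [Matrix.det_submatrix_equiv_self, Matrix.det_fromBlocks_zero₂₁, Matrix.det_one, mul_one]
  have hM' : ∀ i j, M' i j = 0 ∨ M' i j = 1 := by
    intro i j
    have heq : M' i j = Matrix.fromBlocks M 0 0 1 (e.symm i) (e.symm j) := rfl
    rw [heq]
    rcases e.symm i with a | a <;> rcases e.symm j with b | b
    · simpa using hM a b
    · left; simp
    · left; simp
    · by_cases h : a = b
      · right; simp [Matrix.one_apply, h]
      · left; simp [Matrix.one_apply, h]
  rw [← hdet]
  exact le_maxBinDet M' hM'

lemma exists_eval_det_ne_zero {X : Type*} [Nonempty X] {n : ℕ} (f : Fin n → (X → ℝ))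
    (hf : LinearIndependent ℝ f) :
    ∃ x : Fin n → X, (Matrix.of fun i j => f j (x i)).det ≠ 0 := by
  rcases Nat.eq_zero_or_pos n with rfl | hn
  · exact ⟨fun i => Classical.arbitrary X, by simp [Matrix.det_fin_zero]⟩
  haveI : Nonempty (Fin n) := ⟨⟨0, hn⟩⟩
  set V := Submodule.span ℝ (Set.range f) with hV
  haveI : FiniteDimensional ℝ V := FiniteDimensional.span_of_finite ℝ (Set.finite_range f)
  have hdim : finrank ℝ V = n := by rw [hV, finrank_span_eq_card hf, Fintype.card_fin]
  let fV : Fin n → V := fun j => ⟨f j, Submodule.subset_span (Set.mem_range_self j)⟩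
  have hfV : LinearIndependent ℝ fV := by
    apply LinearIndependent.of_comp V.subtype
    exact hf
  let b : Basis (Fin n) ℝ V :=
    basisOfLinearIndependentOfCardEqFinrank hfV (by rw [Fintype.card_fin, hdim])
  have hb : ∀ j, ((b j : V) : X → ℝ) = f j := fun j => by
    rw [coe_basisOfLinearIndependentOfCardEqFinrank]
  let ε : X → Module.Dual ℝ V := fun x => (LinearMap.proj x).comp V.subtype
  have hεapp : ∀ (x : X) (v : V), ε x v = (v : X → ℝ) x := fun x v => rfl
  set W : Submodule ℝ (Module.Dual ℝ V) := Submodule.span ℝ (Set.range ε) with hWdef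
  have hW : W.dualCoannihilator = ⊥ := by
    rw [Submodule.eq_bot_iff]
    intro v hv
    rw [Submodule.mem_dualCoannihilator] at hv
    have hz : ∀ x, (v : X → ℝ) x = 0 := fun x =>
      hv (ε x) (Submodule.subset_span (Set.mem_range_self x))
    exact Subtype.ext (funext hz)
  have hWrank : finrank ℝ W = n := by
    have h1 := Subspace.finrank_add_finrank_dualCoannihilator_eq W
    rw [hW, finrank_bot, add_zero] at h1
    rw [h1, hdim]
  obtain ⟨s, hsub, hspan, hind⟩ := exists_linearIndependent ℝ (Set.range ε)
  have hsfin : s.Finite := by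
    haveI := hind.finite
    exact Set.toFinite s
  haveI : Fintype s := hsfin.fintype
  have hscard : Fintype.card s = n := by
    have := finrank_span_set_eq_card hind
    rw [hspan] at this
    rw [← Set.toFinset_card, ← this, hWrank]
  let eqv : Fin n ≃ s := (Fintype.equivFinOfCardEq hscard).symm
  have hψmem : ∀ i : Fin n, ((eqv i : Module.Dual ℝ V)) ∈ Set.range ε := fun i =>
    hsub (eqv i).2
  choose x hx using fun i => hψmem i
  let ψ : Fin n → Module.Dual ℝ V := fun i => (eqv i : Module.Dual ℝ V)
  have hψ : LinearIndependent ℝ ψ := hind.comp eqv eqv.injective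
  let c : Basis (Fin n) ℝ (Module.Dual ℝ V) :=
    basisOfLinearIndependentOfCardEqFinrank hψ
      (by rw [Fintype.card_fin, Subspace.dual_finrank_eq, hdim])
  have hc : ∀ i, c i = ψ i := fun i => by
    rw [coe_basisOfLinearIndependentOfCardEqFinrank]
  haveI := b.dualBasis.invertibleToMatrix c
  have hdet : (b.dualBasis.toMatrix ⇑c).det ≠ 0 :=
    IsUnit.ne_zero (Matrix.isUnit_det_of_invertible _)
  refine ⟨x, ?_⟩
  have hmat : (Matrix.of fun i j => f j (x i)) = (b.dualBasis.toMatrix ⇑c)ᵀ := by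
    ext i j
    rw [Matrix.transpose_apply, Basis.toMatrix_apply, Basis.dualBasis_repr, hc]
    show f j (x i) = ψ i (b j)
    rw [show ψ i = ε (x i) from (hx i).symm, hεapp, hb]
  rw [hmat, Matrix.det_transpose]
  exact hdet

/-- If `Z ⊆ {0,1}^X` is a nonempty finite linearly dependent set of
nonzero vectors and `p = |Z| - 1`, then there are integers `(Δ_w)_{w ∈ Z}`, not all
zero, with `|Δ_w| ≤ a(p)` and `∑_{w ∈ Z} Δ_w • w = 0`. -/
theorem stmt_1 {X : Type*} [Nonempty X] (Z : Set (X → ℝ)) (hfin : Z.Finite)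
    (hne : Z.Nonempty)
    (h01 : ∀ w ∈ Z, ∀ x, w x = 0 ∨ w x = 1)
    (hnz : ∀ w ∈ Z, w ≠ 0)
    (hdep : ¬ LinearIndependent ℝ (fun w : Z => (w : X → ℝ))) :
    ∃ Δ : (X → ℝ) → ℤ,
      (∃ w ∈ Z, Δ w ≠ 0) ∧
      (∀ w ∈ Z, (|Δ w| : ℝ) ≤ maxBinDet (Z.ncard - 1)) ∧
      ∑ w ∈ hfin.toFinset, (Δ w : ℝ) • w = 0 := by
  classical
  obtain ⟨s, hsZ, hspan, hindep⟩ := exists_linearIndependent ℝ Z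
  have hsfin : s.Finite := hfin.subset hsZ
  have hne' : ¬ Z ⊆ s := by
    intro h
    have hsZeq : s = Z := le_antisymm hsZ h
    rw [hsZeq] at hindep
    exact hdep hindep
  obtain ⟨w₀, hw₀Z, hw₀s⟩ := Set.not_subset.mp hne'
  haveI : Fintype s := hsfin.fintype
  set n := Fintype.card s with hn
  have hncard : s.ncard = n := by
    rw [← Nat.card_coe_set_eq, Nat.card_eq_fintype_card]
  have hnp : n ≤ Z.ncard - 1 := by
    have hlt : s.ncard < Z.ncard := Set.ncard_lt_ncard (ssubset_of_subset_of_ne hsZ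
      (by intro h; rw [h] at hw₀s; exact hw₀s hw₀Z)) hfin
    omega
  let eqv : Fin n ≃ s := (Fintype.equivFin s).symm
  let f : Fin n → (X → ℝ) := fun j => ((eqv j : s) : X → ℝ)
  have hfind : LinearIndependent ℝ f := hindep.comp eqv eqv.injective
  have hrange : Set.range f = s := by
    ext v
    constructor
    · rintro ⟨j, rfl⟩; exact (eqv j).2
    · intro hv; exact ⟨eqv.symm ⟨v, hv⟩, by simp [f]⟩
  have hw₀span : w₀ ∈ span ℝ (Set.range f) := by
    rw [hrange, hspan]; exact subset_span hw₀Z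
  obtain ⟨c, hc⟩ := (mem_span_range_iff_exists_fun ℝ).mp hw₀span
  obtain ⟨x, hxdet⟩ := exists_eval_det_ne_zero f hfind
  set A : Matrix (Fin n) (Fin n) ℝ := Matrix.of fun i j => f j (x i) with hA
  have hA01 : ∀ i j, A i j = 0 ∨ A i j = 1 := fun i j => h01 (f j) (hsZ (eqv j).2) (x i)
  let N : Matrix (Fin n) (Fin n) ℤ := Matrix.of fun i j => if A i j = 1 then 1 else 0
  have hAN : A = N.map (Int.castRingHom ℝ) := by
    ext i j
    rcases hA01 i j with h | h
    · simp [Matrix.map_apply, N, h]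
    · simp [Matrix.map_apply, N, h]
  have hNdet : ((N.det : ℤ) : ℝ) = A.det := by
    rw [hAN, ← RingHom.mapMatrix_apply, ← RingHom.map_det]; rfl
  set b₀ : Fin n → ℝ := fun i => w₀ (x i) with hb₀def
  let bℤ : Fin n → ℤ := fun i => if w₀ (x i) = 1 then 1 else 0
  have hb₀ : b₀ = fun i => ((bℤ i : ℤ) : ℝ) := by
    ext i
    rcases h01 w₀ hw₀Z (x i) with h | h
    · simp [hb₀def, bℤ, h]
    · simp [hb₀def, bℤ, h]
  have hmulvec : A *ᵥ c = b₀ := by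
    ext i
    have hci := congrFun hc (x i)
    simp only [Finset.sum_apply, Pi.smul_apply, smul_eq_mul] at hci
    simp only [Matrix.mulVec, dotProduct, hb₀def]
    rw [← hci]
    exact Finset.sum_congr rfl fun j _ => by rw [hA]; simp [mul_comm]
  have hcramer : A.cramer b₀ = A.det • c := by
    rw [← hmulvec, Matrix.cramer_eq_adjugate_mulVec, Matrix.mulVec_mulVec,
      Matrix.adjugate_mul, Matrix.smul_mulVec, Matrix.one_mulVec]
  let d : Fin n → ℤ := fun j => (N.updateCol j bℤ).det
  have hd : ∀ j, ((d j : ℤ) : ℝ) = A.cramer b₀ j := by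
    intro j
    rw [Matrix.cramer_apply]
    have hupd : A.updateCol j b₀ = (N.updateCol j bℤ).map (Int.castRingHom ℝ) := by
      rw [Matrix.map_updateCol, ← hAN, hb₀]
      rfl
    rw [hupd, ← RingHom.mapMatrix_apply, ← RingHom.map_det]
    rfl
  have hglobal : A.det • w₀ - ∑ j, (A.cramer b₀ j) • f j = 0 := by
    rw [hcramer]
    have : ∑ j, ((A.det • c) j) • f j = A.det • ∑ j, c j • f j := by
      rw [Finset.smul_sum]
      exact Finset.sum_congr rfl fun j _ => by rw [Pi.smul_apply, smul_eq_mul, mul_smul]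
    rw [this, hc, sub_self]
  let Δ : (X → ℝ) → ℤ := fun w =>
    if w = w₀ then N.det else if h : w ∈ s then -(d (eqv.symm ⟨w, h⟩)) else 0
  have hΔw₀ : Δ w₀ = N.det := by simp [Δ]
  have hΔs : ∀ (w) (h : w ∈ s), Δ w = -(d (eqv.symm ⟨w, h⟩)) := by
    intro w h
    have : w ≠ w₀ := fun he => hw₀s (he ▸ h)
    simp [Δ, this, h]
  have hΔ0 : ∀ w, w ≠ w₀ → w ∉ s → Δ w = 0 := by
    intro w h1 h2; simp [Δ, h1, h2]
  refine ⟨Δ, ⟨w₀, hw₀Z, ?_⟩, ?_, ?_⟩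
  · rw [hΔw₀]
    intro h
    apply hxdet
    have : ((N.det : ℤ) : ℝ) = 0 := by rw [h]; simp
    rw [hNdet] at this
    exact this
  · intro w hw
    push_cast
    by_cases h1 : w = w₀
    · rw [h1, hΔw₀]
      rw [hNdet]
      exact abs_det_le_maxBinDet hnp A hA01
    · by_cases h2 : w ∈ s
      · rw [hΔs w h2]
        push_cast
        rw [abs_neg, hd]
        rw [Matrix.cramer_apply]
        refine abs_det_le_maxBinDet hnp _ fun i j' => ?_
        by_cases hj : j' = eqv.symm ⟨w, h2⟩
        · rw [hj, Matrix.updateCol_self]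
          exact h01 w₀ hw₀Z (x i)
        · rw [Matrix.updateCol_ne hj]
          exact hA01 i j'
      · rw [hΔ0 w h1 h2]
        simpa using maxBinDet_nonneg (Z.ncard - 1)
  · have hsubset : insert w₀ hsfin.toFinset ⊆ hfin.toFinset := by
      intro w hw
      rcases Finset.mem_insert.mp hw with h | h
      · exact hfin.mem_toFinset.mpr (h ▸ hw₀Z)
      · exact hfin.mem_toFinset.mpr (hsZ (hsfin.mem_toFinset.mp h))
    have hvanish : ∀ w ∈ hfin.toFinset, w ∉ insert w₀ hsfin.toFinset →
        ((Δ w : ℤ) : ℝ) • w = 0 := by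
      intro w _ hw
      rw [hΔ0 w (fun h => hw (Finset.mem_insert.mpr (Or.inl h)))
        (fun h => hw (Finset.mem_insert.mpr (Or.inr (hsfin.mem_toFinset.mpr h))))]
      simp
    rw [← Finset.sum_subset hsubset hvanish]
    have hw₀nmem : w₀ ∉ hsfin.toFinset := fun h => hw₀s (hsfin.mem_toFinset.mp h)
    rw [Finset.sum_insert hw₀nmem]
    have hsum : ∑ w ∈ hsfin.toFinset, ((Δ w : ℤ) : ℝ) • w = ∑ j, (-(d j : ℤ) : ℝ) • f j := by
      rw [hsfin.toFinset_eq_toFinset, ← Finset.sum_set_coe]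
      rw [← Equiv.sum_comp eqv (fun a : s => ((Δ (a : X → ℝ) : ℤ) : ℝ) • (a : X → ℝ))]
      refine Finset.sum_congr rfl fun j _ => ?_
      have h2 := hΔs ((eqv j : s) : X → ℝ) (eqv j).2
      have h3 : (⟨((eqv j : s) : X → ℝ), (eqv j).2⟩ : s) = eqv j := rfl
      rw [h3, Equiv.symm_apply_apply] at h2
      rw [h2]
      push_cast
      rfl
    rw [hsum, hΔw₀]
    have hneg : ∑ j, (-(d j : ℤ) : ℝ) • f j = -∑ j, (A.cramer b₀ j) • f j := by
      rw [← Finset.sum_neg_distrib]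
      refine Finset.sum_congr rfl fun j _ => ?_
      rw [← neg_smul]
      congr 1
      push_cast
      rw [hd j]
    rw [hneg, hNdet, ← sub_eq_add_neg]
    exact hglobal
end

section
/- Fix an integer n ≥ 2 and consider n items each of size 1 with bin capacity S = n−1, so that a k-times packing into q bins is a family B : Fin q → Finset (Fin n) with |B j| ≤ n−1 for every bin j and each item belonging to exactly k bins. Then: (i) every k-times packing into q bins satisfies k/q ≤ (n−1)/n; (ii) for k = n−1 there is a k-times packing into q = n bins attaining k/q = (n−1)/n (namely the n subsets of cardinality n−1); (iii) for every k with 1 ≤ k < n−1, every k-times packing into q bins satisfies the strict inequality k/q < (n−1)/n. -/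
lemma count_aux (n k q : ℕ) (B : Fin q → Finset (Fin n))
    (h1 : ∀ j, (B j).card ≤ n - 1)
    (h2 : ∀ i, (Finset.univ.filter fun j => i ∈ B j).card = k) :
    n * k ≤ q * (n - 1) := by
  have key : ∑ j : Fin q, (B j).card = n * k := by
    have : ∑ j : Fin q, (B j).card
        = ∑ j : Fin q, ∑ i : Fin n, (if i ∈ B j then 1 else 0) := by
      refine Finset.sum_congr rfl fun j _ => ?_
      rw [← Finset.card_filter, Finset.filter_univ_mem]
    rw [this, Finset.sum_comm]
    have h3 : ∀ i : Fin n, ∑ j : Fin q, (if i ∈ B j then 1 else 0) = k := by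
      intro i
      rw [← Finset.card_filter]
      exact h2 i
    simp [h3, Finset.sum_const, mul_comm]
  calc n * k = ∑ j : Fin q, (B j).card := key.symm
    _ ≤ ∑ j : Fin q, (n - 1) := Finset.sum_le_sum fun j _ => h1 j
    _ = q * (n - 1) := by simp [Finset.sum_const, mul_comm]

lemma kzero_of_qzero (n k : ℕ) (hn : 2 ≤ n) (B : Fin 0 → Finset (Fin n))
    (h2 : ∀ i, (Finset.univ.filter fun j => i ∈ B j).card = k) : k = 0 := by
  have := h2 ⟨0, by omega⟩
  simpa using this.symm

/-- For `n` items of size `1` and bin capacity `S = n - 1`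
(a `k`-times packing into `q` bins is `B : Fin q → Finset (Fin n)` with
`|B j| ≤ n - 1` and each item in exactly `k` bins):
(i) every `k`-times packing into `q` bins satisfies `k/q ≤ (n-1)/n`;
(ii) for `k = n-1` the `n` subsets of cardinality `n-1` give a packing into
`q = n` bins attaining `k/q = (n-1)/n`;
(iii) for `1 ≤ k < n-1` every `k`-times packing satisfies `k/q < (n-1)/n`. -/
theorem stmt_3 (n : ℕ) (hn : 2 ≤ n) :
    (∀ (k q : ℕ) (B : Fin q → Finset (Fin n)),
        (∀ j, (B j).card ≤ n - 1) →
        (∀ i, (Finset.univ.filter fun j => i ∈ B j).card = k) →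
        (k : ℝ) / q ≤ ((n : ℝ) - 1) / n) ∧
    ((∀ j : Fin n, (Finset.univ.erase j).card ≤ n - 1) ∧
      (∀ i : Fin n,
        (Finset.univ.filter fun j : Fin n => i ∈ Finset.univ.erase j).card = n - 1)) ∧
    (∀ k : ℕ, 1 ≤ k → k < n - 1 →
      ∀ (q : ℕ) (B : Fin q → Finset (Fin n)),
        (∀ j, (B j).card ≤ n - 1) →
        (∀ i, (Finset.univ.filter fun j => i ∈ B j).card = k) →
        (k : ℝ) / q < ((n : ℝ) - 1) / n) := by
  have hn0 : (0 : ℝ) < n := by positivity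
  have hn1 : (0 : ℝ) ≤ (n : ℝ) - 1 := by
    have : (1 : ℝ) ≤ n := by exact_mod_cast (by omega : 1 ≤ n)
    linarith
  refine ⟨?_, ⟨?_, ?_⟩, ?_⟩
  · intro k q B h1 h2
    rcases Nat.eq_zero_or_pos q with hq | hq
    · subst hq
      have hk : k = 0 := kzero_of_qzero n k hn B h2
      subst hk
      simp
      positivity
    · have hle := count_aux n k q B h1 h2
      have hqR : (0 : ℝ) < q := by exact_mod_cast hq
      rw [div_le_div_iff₀ hqR hn0]
      have : ((n * k : ℕ) : ℝ) ≤ ((q * (n - 1) : ℕ) : ℝ) := by exact_mod_cast hle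
      have hcast : ((n - 1 : ℕ) : ℝ) = (n : ℝ) - 1 := by
        rw [Nat.cast_sub (by omega)]; simp
      push_cast [hcast] at this
      nlinarith
  · intro j
    simp [Finset.card_erase_of_mem]
  · intro i
    have : (Finset.univ.filter fun j : Fin n => i ∈ Finset.univ.erase j)
        = Finset.univ.erase i := by
      ext j
      simp [Finset.mem_erase, eq_comm, Ne]
    rw [this]
    simp [Finset.card_erase_of_mem]
  · intro k hk1 hk2 q B h1 h2
    rcases Nat.eq_zero_or_pos q with hq | hq
    · subst hq
      have hk : k = 0 := kzero_of_qzero n k hn B h2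
      omega
    · have hle := count_aux n k q B h1 h2
      have hne : n * k ≠ q * (n - 1) := by
        intro heq
        have hdvd : (n - 1) ∣ n * k := ⟨q, by rw [heq]; ring⟩
        have hc : Nat.Coprime (n - 1) n := by
          have h : Nat.Coprime (n - 1) ((n - 1) + 1) := by simp
          rwa [Nat.sub_add_cancel (by omega : 1 ≤ n)] at h
        have hdk : (n - 1) ∣ k := hc.dvd_of_dvd_mul_left hdvd
        have := Nat.le_of_dvd (by omega) hdk
        omega
      have hlt : n * k < q * (n - 1) := lt_of_le_of_ne hle hne
      have hqR : (0 : ℝ) < q := by exact_mod_cast hq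
      rw [div_lt_div_iff₀ hqR hn0]
      have : ((n * k : ℕ) : ℝ) < ((q * (n - 1) : ℕ) : ℝ) := by exact_mod_cast hlt
      have hcast : ((n - 1 : ℕ) : ℝ) = (n : ℝ) - 1 := by
        rw [Nat.cast_sub (by omega)]; simp
      push_cast [hcast] at this
      nlinarith
end

section
/- Consider the 6 items with sizes (4, 2, 5, 3, 2, 1) and bin capacity S = 9. Then: (i) there exists a 9-times packing into 17 bins in which every bin has total size exactly 9, namely 1 bin {4,5}, 2 bins {4,2,3}, 3 bins {2,5,2'}, 5 bins {5,3,1}, 2 bins {4,3,2'}, and 4 bins {4,2,2',1}, where 2 and 2' denote the two distinct items of size 2; (ii) every k-times packing into q bins satisfies k/q ≤ 9/17; (iii) for every k with 1 ≤ k < 9, every k-times packing into q bins satisfies the strict inequality k/q < 9/17. In particular, k = 9 is the smallest k for which a k-times bin packing achieves the egalitarian connection time 9/17 for this instance. -/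
/-- The six item sizes `(4, 2, 5, 3, 2, 1)`. -/
noncomputable def d4 : Fin 6 → ℝ := ![4, 2, 5, 3, 2, 1]

def B4 : Fin 17 → Finset (Fin 6) :=
  ![{0,2}, {0,1,3}, {0,1,3}, {1,2,4}, {1,2,4}, {1,2,4},
    {2,3,5}, {2,3,5}, {2,3,5}, {2,3,5}, {2,3,5},
    {0,3,4}, {0,3,4}, {0,1,4,5}, {0,1,4,5}, {0,1,4,5}, {0,1,4,5}]

lemma s1 : ∑ x ∈ ({0,2}:Finset (Fin 6)), d4 x = 9 := by
  rw [Finset.sum_insert (by decide), Finset.sum_singleton]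
  norm_num [show d4 0 = 4 from rfl, show d4 2 = 5 from rfl]

lemma s2 : ∑ x ∈ ({0,1,3}:Finset (Fin 6)), d4 x = 9 := by
  rw [Finset.sum_insert (by decide), Finset.sum_insert (by decide), Finset.sum_singleton]
  norm_num [show d4 0 = 4 from rfl, show d4 1 = 2 from rfl, show d4 3 = 3 from rfl]

lemma s3 : ∑ x ∈ ({1,2,4}:Finset (Fin 6)), d4 x = 9 := by
  rw [Finset.sum_insert (by decide), Finset.sum_insert (by decide), Finset.sum_singleton]
  norm_num [show d4 1 = 2 from rfl, show d4 2 = 5 from rfl, show d4 4 = 2 from rfl]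

lemma s4 : ∑ x ∈ ({2,3,5}:Finset (Fin 6)), d4 x = 9 := by
  rw [Finset.sum_insert (by decide), Finset.sum_insert (by decide), Finset.sum_singleton]
  norm_num [show d4 2 = 5 from rfl, show d4 3 = 3 from rfl, show d4 5 = 1 from rfl]

lemma s5 : ∑ x ∈ ({0,3,4}:Finset (Fin 6)), d4 x = 9 := by
  rw [Finset.sum_insert (by decide), Finset.sum_insert (by decide), Finset.sum_singleton]
  norm_num [show d4 0 = 4 from rfl, show d4 3 = 3 from rfl, show d4 4 = 2 from rfl]

lemma s6 : ∑ x ∈ ({0,1,4,5}:Finset (Fin 6)), d4 x = 9 := by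
  rw [Finset.sum_insert (by decide), Finset.sum_insert (by decide),
    Finset.sum_insert (by decide), Finset.sum_singleton]
  norm_num [show d4 0 = 4 from rfl, show d4 1 = 2 from rfl,
    show d4 4 = 2 from rfl, show d4 5 = 1 from rfl]

lemma key (k q : ℕ) (B : Fin q → Finset (Fin 6))
    (hle : ∀ j, ∑ i ∈ B j, d4 i ≤ 9)
    (hc : ∀ i : Fin 6, (Finset.univ.filter fun j => i ∈ B j).card = k) :
    17 * k ≤ 9 * q := by
  have h1 : ∑ j : Fin q, ∑ i ∈ B j, d4 i ≤ ∑ _j : Fin q, (9 : ℝ) :=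
    Finset.sum_le_sum fun j _ => hle j
  have h2 : ∑ j : Fin q, ∑ i ∈ B j, d4 i = (k : ℝ) * 17 := by
    have e1 : ∀ j : Fin q, ∑ i ∈ B j, d4 i = ∑ i : Fin 6, if i ∈ B j then d4 i else 0 := by
      intro j
      rw [Finset.sum_ite_mem, Finset.univ_inter]
    simp_rw [e1]
    rw [Finset.sum_comm]
    have e2 : ∀ i : Fin 6, ∑ j : Fin q, (if i ∈ B j then d4 i else 0) = (k : ℝ) * d4 i := by
      intro i
      rw [← Finset.sum_filter, Finset.sum_const, hc i, nsmul_eq_mul]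
    simp_rw [e2, ← Finset.mul_sum]
    have e3 : ∑ i : Fin 6, d4 i = 17 := by
      rw [Fin.sum_univ_six]
      norm_num [show d4 0 = 4 from rfl, show d4 1 = 2 from rfl, show d4 2 = 5 from rfl,
        show d4 3 = 3 from rfl, show d4 4 = 2 from rfl, show d4 5 = 1 from rfl]
    rw [e3]
  rw [h2, Finset.sum_const] at h1
  simp only [Finset.card_univ, Fintype.card_fin, nsmul_eq_mul] at h1
  have : ((17 * k : ℕ) : ℝ) ≤ ((9 * q : ℕ) : ℝ) := by push_cast; linarith
  exact_mod_cast this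

/-- For the items of sizes `(4,2,5,3,2,1)` and capacity `S = 9`:
(i) there is a `9`-times packing into `17` bins, all of size exactly `9`, consisting
of `1` bin `{4,5}`, `2` bins `{4,2,3}`, `3` bins `{2,5,2'}`, `5` bins `{5,3,1}`,
`2` bins `{4,3,2'}` and `4` bins `{4,2,2',1}` (items indexed `0,…,5`);
(ii) every `k`-times packing into `q` bins has `k/q ≤ 9/17`;
(iii) for `1 ≤ k < 9` every `k`-times packing has `k/q < 9/17`. -/
theorem stmt_4 :
    (∃ B : Fin 17 → Finset (Fin 6),
      (∀ j, ∑ i ∈ B j, d4 i = 9) ∧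
      (∀ i : Fin 6, (Finset.univ.filter fun j => i ∈ B j).card = 9) ∧
      (Finset.univ.filter fun j => B j = ({0, 2} : Finset (Fin 6))).card = 1 ∧
      (Finset.univ.filter fun j => B j = ({0, 1, 3} : Finset (Fin 6))).card = 2 ∧
      (Finset.univ.filter fun j => B j = ({1, 2, 4} : Finset (Fin 6))).card = 3 ∧
      (Finset.univ.filter fun j => B j = ({2, 3, 5} : Finset (Fin 6))).card = 5 ∧
      (Finset.univ.filter fun j => B j = ({0, 3, 4} : Finset (Fin 6))).card = 2 ∧
      (Finset.univ.filter fun j => B j = ({0, 1, 4, 5} : Finset (Fin 6))).card = 4) ∧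
    (∀ (k q : ℕ) (B : Fin q → Finset (Fin 6)),
      (∀ j, ∑ i ∈ B j, d4 i ≤ 9) →
      (∀ i : Fin 6, (Finset.univ.filter fun j => i ∈ B j).card = k) →
      (k : ℝ) / q ≤ 9 / 17) ∧
    (∀ k : ℕ, 1 ≤ k → k < 9 →
      ∀ (q : ℕ) (B : Fin q → Finset (Fin 6)),
        (∀ j, ∑ i ∈ B j, d4 i ≤ 9) →
        (∀ i : Fin 6, (Finset.univ.filter fun j => i ∈ B j).card = k) →
        (k : ℝ) / q < 9 / 17) := by
  refine ⟨⟨B4, ?_, ?_, ?_, ?_, ?_, ?_, ?_, ?_⟩, ?_, ?_⟩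
  · intro j
    fin_cases j <;> first | exact s1 | exact s2 | exact s3 | exact s4 | exact s5 | exact s6
  · decide
  · decide
  · decide
  · decide
  · decide
  · decide
  · decide
  · intro k q B hle hc
    rcases Nat.eq_zero_or_pos q with rfl | hq
    · simp; positivity
    have h := key k q B hle hc
    rw [div_le_div_iff₀ (by exact_mod_cast hq) (by norm_num)]
    have : ((17 * k : ℕ) : ℝ) ≤ ((9 * q : ℕ) : ℝ) := by exact_mod_cast h
    push_cast at this; linarith
  · intro k hk1 hk9 q B hle hc
    have hq : 0 < q := by
      by_contra h
      push_neg at h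
      interval_cases q
      have := hc 0
      simp at this
      omega
    have h := key k q B hle hc
    have hne : 17 * k ≠ 9 * q := by
      intro he
      have h9 : 9 ∣ 17 * k := he ▸ Dvd.intro q rfl
      have : 9 ∣ k := Nat.Coprime.dvd_of_dvd_mul_left (by norm_num) h9
      omega
    have hlt : 17 * k < 9 * q := lt_of_le_of_ne h hne
    rw [div_lt_div_iff₀ (by exact_mod_cast hq) (by norm_num)]
    have : ((17 * k : ℕ) : ℝ) < ((9 * q : ℕ) : ℝ) := by exact_mod_cast hlt
    push_cast at this; linarith
end

section
/- Let D be the list consisting of 7 items of size 6, then 7 items of size 10, then 3 items of size 16, then 10 items of size 34, then 10 items of size 51 (in this order), with bin capacity S = 101. Then for every integer k ≥ 1, OPT(D_k) = 10k and FFk(D_k) = 17 + 10(k−1) = 10k + 7; in particular FFk(D_k)/OPT(D_k) = 1 + 7/(10k), which equals 1.7 for k = 1, is at most 1.35 for every k ≥ 2, and decreases as k increases. -/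
/-- One step of First-Fit for `k`-times bin packing: insert (a copy of) the item
with index `i` and size `d i` into the first bin that has enough remaining capacity
and does not already contain another copy of item `i`; open a new bin otherwise. -/
noncomputable def ffInsert (d : ℕ → ℝ) (S : ℝ) (i : ℕ) :
    List (Finset ℕ) → List (Finset ℕ)
  | [] => [{i}]
  | b :: bs =>
      if (∑ j ∈ b, d j) + d i ≤ S ∧ i ∉ b then insert i b :: bs
      else b :: ffInsert d S i bs

/-- The bins produced by `FFk` on `D_k` (`k` consecutive copies of the list `D`). -/
noncomputable def ffkBins (S : ℝ) (k : ℕ) (D : List ℝ) : List (Finset ℕ) :=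
  ((List.replicate k (List.range D.length)).flatten).foldl
    (fun bins i => ffInsert (fun j => D.getD j 0) S i bins) []

/-- `FFk(D_k)`: the number of bins produced by First-Fit for `k`-times bin packing. -/
noncomputable def FFk (S : ℝ) (k : ℕ) (D : List ℝ) : ℕ := (ffkBins S k D).length

/-- `OPT(D_k)`: the minimum number of bins of a `k`-times packing of `D`. -/
noncomputable def kOPT (S : ℝ) (k : ℕ) (D : List ℝ) : ℕ :=
  sInf {q | ∃ B : Fin q → Finset (Fin D.length),
    (∀ j, ∑ i ∈ B j, D.get i ≤ S) ∧
    (∀ i, (Finset.univ.filter fun j => i ∈ B j).card = k)}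

/-! Every item copy has to be packed, and the sizes add up to `1010 = 10 · 101`, so a `k`-times
packing needs at least `10k` bins; splitting the items into ten bins of load exactly `101` and
repeating that packing `k` times attains the bound. First-Fit is evaluated on the natural-number
sizes: after three rounds its first 8 bins are full, and from then on every round puts 10 new
full bins in front of the remaining 29, which it reproduces exactly. Hence
`FFk = 8 + 10 (k - 3) + 29 = 10k + 7` for `k ≥ 3`, and the cases `k = 1, 2` are computed. -/

open Finset

def IsKTimesPacking (S : ℝ) (k : ℕ) (D : List ℝ) {q : ℕ} (B : Fin q → Finset (Fin D.length)) :
    Prop :=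
  (∀ j, ∑ i ∈ B j, D.get i ≤ S) ∧ ∀ i, #{j | i ∈ B j} = k

namespace IsKTimesPacking
variable {S : ℝ} {k q : ℕ} {D : List ℝ} {B : Fin q → Finset (Fin D.length)}

theorem mul_sum_le (hB : IsKTimesPacking S k D B) : k * D.sum ≤ q * S :=
  calc (k : ℝ) * D.sum = ∑ i, #{j | i ∈ B j} • D.get i := by
        simp [hB.2, ← Finset.mul_sum]
    _ = ∑ j, ∑ i ∈ B j, D.get i := by
        simp only [← Finset.sum_const]
        exact Finset.sum_comm' (by simp)
    _ ≤ ∑ _j : Fin q, S := Finset.sum_le_sum fun j _ => hB.1 j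
    _ = q * S := by simp

theorem replicate (hB : IsKTimesPacking S 1 D B) (k : ℕ) :
    IsKTimesPacking S k D fun j : Fin (q * k) => B (finProdFinEquiv.symm j).1 := by
  refine ⟨fun j => hB.1 _, fun i => ?_⟩
  rw [Finset.card_equiv finProdFinEquiv.symm (t := {x | i ∈ B x.1}) (by simp),
    ← Finset.univ_product_univ, Finset.filter_product_left (fun a => i ∈ B a),
    Finset.card_product, hB.2 i]
  simp

end IsKTimesPacking

theorem isKTimesPacking_one_fiber {S : ℝ} {D : List ℝ} {q : ℕ} {f : Fin D.length → Fin q}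
    (hf : ∀ j, ∑ i ∈ {i | f i = j}, D.get i ≤ S) :
    IsKTimesPacking S 1 D fun j => {i | f i = j} :=
  ⟨hf, fun i => by simp [Finset.filter_eq]⟩

theorem kOPT_eq_of_isKTimesPacking {S : ℝ} {k q : ℕ} {D : List ℝ}
    {B : Fin q → Finset (Fin D.length)} (hS : 0 < S) (hB : IsKTimesPacking S k D B)
    (hfull : q * S ≤ k * D.sum) : kOPT S k D = q := by
  refine le_antisymm (Nat.sInf_le ⟨B, hB⟩) (le_csInf ⟨q, B, hB⟩ ?_)
  rintro p ⟨B', hB'⟩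
  have hB' : IsKTimesPacking S k D B' := hB'
  exact_mod_cast le_of_mul_le_mul_right (hfull.trans hB'.mul_sum_le) hS

/-- `ffInsert` with natural-number sizes and capacity, which `decide` can evaluate. -/
def natFFInsert (d : ℕ → ℕ) (S i : ℕ) : List (Finset ℕ) → List (Finset ℕ)
  | [] => [{i}]
  | b :: bs =>
      if (∑ j ∈ b, d j) + d i ≤ S ∧ i ∉ b then insert i b :: bs
      else b :: natFFInsert d S i bs

theorem ffInsert_natCast (d : ℕ → ℕ) (S i : ℕ) (bins : List (Finset ℕ)) :
    ffInsert (fun j => (d j : ℝ)) S i bins = natFFInsert d S i bins := by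
  induction bins with
  | nil => rfl
  | cons b bs ih =>
    simp only [ffInsert, natFFInsert, ih, ← Nat.cast_sum, ← Nat.cast_add, Nat.cast_le]

def natFFRound (d : ℕ → ℕ) (S n : ℕ) (bins : List (Finset ℕ)) : List (Finset ℕ) :=
  (List.range n).foldl (fun bins i => natFFInsert d S i bins) bins

theorem List.foldl_flatten_replicate {α β : Type*} (f : β → α → β) (l : List α) (k : ℕ)
    (b : β) : ((List.replicate k l).flatten).foldl f b = (fun b => l.foldl f b)^[k] b := by
  induction k generalizing b with
  | zero => rfl
  | succ k ih => simp [List.replicate_succ, ih]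

theorem ffkBins_natCast (L : List ℕ) (S k : ℕ) :
    ffkBins S k (L.map (↑)) = (natFFRound (fun j => L.getD j 0) S L.length)^[k] [] := by
  have hd : (fun j => (L.map ((↑) : ℕ → ℝ)).getD j 0) = fun j => ((L.getD j 0 : ℕ) : ℝ) := by
    funext j
    exact_mod_cast List.getD_map (l := L) (d := 0) (n := j) ((↑) : ℕ → ℝ)
  simp only [ffkBins, hd, ffInsert_natCast, List.length_map, List.foldl_flatten_replicate]
  rfl

def IsFull (d : ℕ → ℕ) (S n : ℕ) (b : Finset ℕ) : Prop :=
  ∀ i < n, ¬((∑ j ∈ b, d j) + d i ≤ S ∧ i ∉ b)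

instance (d : ℕ → ℕ) (S n : ℕ) : DecidablePred (IsFull d S n) :=
  fun _ => Nat.decidableBallLT n _

section IsFull
variable {d : ℕ → ℕ} {S n : ℕ} {F : List (Finset ℕ)}

theorem natFFInsert_append_of_isFull (hF : ∀ b ∈ F, IsFull d S n b) {i : ℕ} (hi : i < n)
    (T : List (Finset ℕ)) : natFFInsert d S i (F ++ T) = F ++ natFFInsert d S i T := by
  induction F with
  | nil => rfl
  | cons b bs ih =>
    rw [List.forall_mem_cons] at hF
    simp only [List.cons_append, natFFInsert, if_neg (hF.1 i hi), ih hF.2]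

theorem natFFRound_append_of_isFull (hF : ∀ b ∈ F, IsFull d S n b) (T : List (Finset ℕ)) :
    natFFRound d S n (F ++ T) = F ++ natFFRound d S n T := by
  suffices ∀ l : List ℕ, (∀ i ∈ l, i < n) → ∀ T : List (Finset ℕ),
      l.foldl (fun bins i => natFFInsert d S i bins) (F ++ T) =
        F ++ l.foldl (fun bins i => natFFInsert d S i bins) T from
    this _ (fun i => List.mem_range.mp) T
  intro l hl
  induction l with
  | nil => exact fun _ => rfl
  | cons i l ih =>
    intro T
    rw [List.forall_mem_cons] at hl
    simp only [List.foldl_cons, natFFInsert_append_of_isFull hF hl.1, ih hl.2]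

theorem iterate_natFFRound_of_periodic {k : ℕ} {H C T : List (Finset ℕ)}
    (hk : (natFFRound d S n)^[k] [] = H ++ T) (hH : ∀ b ∈ H, IsFull d S n b)
    (hC : ∀ b ∈ C, IsFull d S n b) (hT : natFFRound d S n T = C ++ T) (m : ℕ) :
    (natFFRound d S n)^[k + m] [] = H ++ (List.replicate m C).flatten ++ T := by
  induction m with
  | zero => simpa using hk
  | succ m ih =>
    have hfull : ∀ b ∈ H ++ (List.replicate m C).flatten, IsFull d S n b := by
      simp only [List.mem_append, List.mem_flatten, List.mem_replicate]
      rintro b (hb | ⟨l, ⟨-, rfl⟩, hb⟩)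
      exacts [hH b hb, hC b hb]
    rw [← add_assoc, Function.iterate_succ_apply', ih, natFFRound_append_of_isFull hfull, hT,
      List.replicate_succ', List.flatten_append]
    simp

end IsFull

theorem List.get_map_natCast (L : List ℕ) (i : Fin (L.map ((↑) : ℕ → ℝ)).length) :
    (L.map ((↑) : ℕ → ℝ)).get i = (L.getD i 0 : ℝ) := by
  rw [List.get_eq_getElem, ← List.getD_eq_getElem _ 0, ← Nat.cast_zero, List.getD_map]

def sizes : List ℕ :=
  List.replicate 7 6 ++ List.replicate 7 10 ++ List.replicate 3 16 ++
    List.replicate 10 34 ++ List.replicate 10 51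

def sizesFFRound : List (Finset ℕ) → List (Finset ℕ) :=
  natFFRound (fun j => sizes.getD j 0) 101 sizes.length

def sizesFFTail : List (Finset ℕ) := (sizesFFRound^[3] []).drop 8

theorem sizesFFRound_sizesFFTail :
    sizesFFRound sizesFFTail = (sizesFFRound sizesFFTail).take 10 ++ sizesFFTail := by
  decide +kernel

theorem length_iterate_sizesFFRound (m : ℕ) :
    (sizesFFRound^[3 + m] []).length = 10 * (3 + m) + 7 := by
  have h : sizesFFRound^[3 + m] [] = (sizesFFRound^[3] []).take 8 ++
      (List.replicate m ((sizesFFRound sizesFFTail).take 10)).flatten ++ sizesFFTail :=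
    iterate_natFFRound_of_periodic (List.take_append_drop 8 _).symm (by decide +kernel)
      (by decide +kernel) sizesFFRound_sizesFFTail m
  simp only [h, List.length_append, List.length_flatten, List.map_replicate, List.sum_replicate,
    show ((sizesFFRound^[3] []).take 8).length = 8 by decide +kernel,
    show ((sizesFFRound sizesFFTail).take 10).length = 10 by decide +kernel,
    show sizesFFTail.length = 29 by decide +kernel, smul_eq_mul]
  ring

theorem FFk_sizes {k : ℕ} (hk : 1 ≤ k) : FFk 101 k (sizes.map (↑)) = 10 * k + 7 := by
  rw [FFk, ← Nat.cast_ofNat, ffkBins_natCast]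
  obtain rfl | rfl | ⟨m, rfl⟩ : k = 1 ∨ k = 2 ∨ ∃ m, k = 3 + m := by
    rcases k with _ | _ | _ | m <;> grind
  exacts [by decide +kernel, by decide +kernel, length_iterate_sizesFFRound m]

/-- Bins `0, 1, 2` receive `51 + 34 + 16`, bins `3, …, 9` receive `51 + 34 + 10 + 6`. -/
def optBin (i : ℕ) : Fin 10 :=
  Fin.ofNat 10 <| if i < 7 then i + 3 else if i < 14 then i - 4 else if i < 17 then i - 14
    else if i < 27 then i - 17 else i - 27

theorem kOPT_sizes (k : ℕ) : kOPT 101 k (sizes.map (↑)) = 10 * k := by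
  have hpack : IsKTimesPacking 101 1 (sizes.map (↑)) fun j => {i | optBin i = j} := by
    refine isKTimesPacking_one_fiber fun j => ?_
    simp only [List.get_map_natCast, ← Nat.cast_sum]
    exact_mod_cast (by decide +kernel : ∀ j, ∑ i ∈ {i : Fin (sizes.map ((↑) : ℕ → ℝ)).length |
      optBin i = j}, sizes.getD i 0 ≤ 101) j
  refine kOPT_eq_of_isKTimesPacking (by norm_num) (hpack.replicate k) ?_
  rw [← Nat.cast_list_sum, show sizes.sum = 1010 by decide +kernel]
  push_cast
  linarith

/-- For `D` consisting of `7` items of size `6`, `7` of size `10`, `3`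
of size `16`, `10` of size `34` and `10` of size `51` (in this order), `S = 101`:
for every `k ≥ 1`, `OPT(D_k) = 10k` and `FFk(D_k) = 17 + 10(k-1) = 10k + 7`; in
particular the ratio is `1 + 7/(10k)`, which equals `1.7` for `k = 1`, is at most
`1.35` for `k ≥ 2`, and strictly decreases as `k` increases. -/
theorem stmt_7 (D : List ℝ)
    (hD : D = List.replicate 7 (6 : ℝ) ++ List.replicate 7 10 ++
      List.replicate 3 16 ++ List.replicate 10 34 ++ List.replicate 10 51) :
    (∀ k : ℕ, 1 ≤ k →
      kOPT 101 k D = 10 * k ∧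
      FFk 101 k D = 10 * k + 7 ∧
      (FFk 101 k D : ℝ) / (kOPT 101 k D : ℝ) = 1 + 7 / (10 * (k : ℝ))) ∧
    ((1 : ℝ) + 7 / (10 * (1 : ℝ)) = 1.7) ∧
    (∀ k : ℕ, 2 ≤ k → (1 : ℝ) + 7 / (10 * (k : ℝ)) ≤ 1.35) ∧
    (∀ k₁ k₂ : ℕ, 1 ≤ k₁ → k₁ < k₂ →
      (1 : ℝ) + 7 / (10 * (k₂ : ℝ)) < 1 + 7 / (10 * (k₁ : ℝ))) := by
  obtain rfl : D = sizes.map (↑) := by simp [hD, sizes]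
  refine ⟨fun k hk => ⟨kOPT_sizes k, FFk_sizes hk, ?_⟩, by norm_num, fun k hk => ?_,
    fun k₁ k₂ hk₁ hk => ?_⟩
  · rw [kOPT_sizes, FFk_sizes hk]
    have hk0 : (k : ℝ) ≠ 0 := by positivity
    field_simp
    push_cast
    ring
  · have hk : (20 : ℝ) ≤ 10 * k := by norm_cast; omega
    calc 1 + 7 / (10 * (k : ℝ)) ≤ 1 + 7 / 20 := by gcongr
      _ = 1.35 := by norm_num
  · have hk₁0 : (0 : ℝ) < k₁ := by exact_mod_cast hk₁
    gcongr
end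

section
/- For every instance D with item sizes in (0, S], total size V(D) > S, and every integer k ≥ 1, the Next-Fit algorithm for k-times bin packing satisfies NFk(D_k) ≤ 2·OPT(D_k) + 1. -/
/-- Next-Fit over a list of item sizes: a single bin is kept open (state: number of
bins opened so far, load of the open bin; the initial fictitious load `S + 1` forces
the first item to open a bin).  If the current item fits in the open bin it is placed
there, otherwise the bin is closed and a new bin is opened. -/
noncomputable def nfCount (S : ℝ) (l : List ℝ) : ℕ :=
  (l.foldl (fun (st : ℕ × ℝ) s =>
      if st.2 + s ≤ S then (st.1, st.2 + s) else (st.1 + 1, s))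
    ((0 : ℕ), S + 1)).1

/-- `NFk(D_k)`: the number of bins Next-Fit produces on `k` consecutive copies of `D`. -/
noncomputable def NFk (S : ℝ) (k : ℕ) (D : List ℝ) : ℕ :=
  nfCount S (List.replicate k D).flatten

/-- Key invariant for the Next-Fit fold. -/
lemma nf_fold_inv (S : ℝ) (hS : 0 < S) :
    ∀ (l : List ℝ), (∀ x ∈ l, 0 < x ∧ x ≤ S) → ∀ (st : ℕ × ℝ) (V : ℝ),
    ((st = ((0 : ℕ), S + 1) ∧ V = 0) ∨
      (1 ≤ st.1 ∧ 0 < st.2 ∧ S * ((st.1 : ℝ) - 1) < 2 * V - st.2)) →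
    (let st' := l.foldl (fun (st : ℕ × ℝ) s =>
        if st.2 + s ≤ S then (st.1, st.2 + s) else (st.1 + 1, s)) st
     (st' = ((0 : ℕ), S + 1) ∧ V + l.sum = 0) ∨
      (1 ≤ st'.1 ∧ 0 < st'.2 ∧ S * ((st'.1 : ℝ) - 1) < 2 * (V + l.sum) - st'.2)) := by
  intro l
  induction l with
  | nil => intro _ st V h; simpa using h
  | cons s t ih =>
    intro hmem st V h
    obtain ⟨hs0, hsS⟩ := hmem s (by simp)
    have hmem' : ∀ x ∈ t, 0 < x ∧ x ≤ S := fun x hx => hmem x (by simp [hx])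
    simp only [List.foldl_cons, List.sum_cons]
    have step : ∀ (st1 : ℕ × ℝ),
        (st1 = (if st.2 + s ≤ S then (st.1, st.2 + s) else (st.1 + 1, s))) →
        ((st1 = ((0 : ℕ), S + 1) ∧ (V + s) = 0) ∨
          (1 ≤ st1.1 ∧ 0 < st1.2 ∧ S * ((st1.1 : ℝ) - 1) < 2 * (V + s) - st1.2)) := by
      intro st1 hst1
      rcases h with ⟨hst, hV⟩ | ⟨hb, hc, hlt⟩
      · -- initial state: the item does not fit (load S+1)
        right
        rw [hst] at hst1
        have hnot : ¬ ((S + 1) + s ≤ S) := by linarith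
        simp only [hnot, if_false] at hst1
        subst hst1
        simp only [Nat.cast_add, Nat.cast_zero, Nat.cast_one]
        constructor
        · exact Nat.le_refl 1
        · refine ⟨hs0, ?_⟩
          rw [hV]; ring_nf; linarith
      · right
        by_cases hfit : st.2 + s ≤ S
        · simp only [hfit, if_true] at hst1
          subst hst1
          refine ⟨hb, ?_, ?_⟩
          · show (0:ℝ) < st.2 + s; linarith
          · show S * ((st.1:ℝ) - 1) < 2 * (V + s) - (st.2 + s); linarith
        · simp only [hfit, if_false] at hst1
          subst hst1
          have hgt : S < st.2 + s := not_le.mp hfit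
          refine ⟨le_trans hb (Nat.le_succ _), hs0, ?_⟩
          simp only [Nat.cast_add, Nat.cast_one]
          have : S * ((st.1 : ℝ) + 1 - 1) = S * ((st.1 : ℝ) - 1) + S := by ring
          rw [this]
          linarith
    have h1 := step _ rfl
    have := ih hmem' _ (V + s) h1
    simpa [add_assoc] using this

/-- Total packed volume is at most `q * S` for any feasible `k`-packing. -/
lemma kOPT_volume (S : ℝ) (k : ℕ) (D : List ℝ)
    (hD : ∀ x ∈ D, 0 < x ∧ x ≤ S)
    (q : ℕ) (B : Fin q → Finset (Fin D.length))
    (hload : ∀ j, ∑ i ∈ B j, D.get i ≤ S)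
    (hcard : ∀ i, (Finset.univ.filter fun j => i ∈ B j).card = k) :
    (k : ℝ) * D.sum ≤ (q : ℝ) * S := by
  have hDsum : D.sum = ∑ i : Fin D.length, D.get i := by
    conv_lhs => rw [← List.ofFn_get D]
    rw [List.sum_ofFn]
  have hdc : ∑ j : Fin q, ∑ i ∈ B j, D.get i
      = ∑ i : Fin D.length, (k : ℝ) * D.get i := by
    have : ∀ j, ∑ i ∈ B j, D.get i
        = ∑ i : Fin D.length, if i ∈ B j then D.get i else 0 := by
      intro j
      rw [Finset.sum_ite_mem]
      simp
    simp_rw [this]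
    rw [Finset.sum_comm]
    congr 1
    ext i
    rw [← Finset.sum_filter, Finset.sum_const, hcard i, nsmul_eq_mul]
  calc (k : ℝ) * D.sum = ∑ i : Fin D.length, (k : ℝ) * D.get i := by
        rw [hDsum, Finset.mul_sum]
    _ = ∑ j : Fin q, ∑ i ∈ B j, D.get i := hdc.symm
    _ ≤ ∑ _j : Fin q, S := Finset.sum_le_sum (fun j _ => hload j)
    _ = (q : ℝ) * S := by simp [mul_comm]

/-- The feasible set defining `kOPT` is nonempty. -/
lemma kOPT_nonempty (S : ℝ) (k : ℕ) (D : List ℝ)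
    (hD : ∀ x ∈ D, 0 < x ∧ x ≤ S) :
    {q | ∃ B : Fin q → Finset (Fin D.length),
      (∀ j, ∑ i ∈ B j, D.get i ≤ S) ∧
      (∀ i, (Finset.univ.filter fun j => i ∈ B j).card = k)}.Nonempty := by
  classical
  set n := D.length with hn
  refine ⟨k * n, ?_⟩
  let e : Fin k × Fin n ≃ Fin (k * n) := finProdFinEquiv
  refine ⟨fun j => {(e.symm j).2}, ?_, ?_⟩
  · intro j
    rw [Finset.sum_singleton]
    exact (hD _ (by simpa using List.get_mem D _ _)).2
  · intro i
    have h1 : (Finset.univ.filter fun j : Fin (k * n) => i ∈ ({(e.symm j).2} : Finset (Fin n))).card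
        = (Finset.univ.filter fun p : Fin k × Fin n => p.2 = i).card := by
      refine (Finset.card_equiv e ?_).symm
      intro p
      simp [e.symm_apply_apply, eq_comm]
    rw [h1]
    have h2 : (Finset.univ.filter fun p : Fin k × Fin n => p.2 = i)
        = Finset.univ ×ˢ ({i} : Finset (Fin n)) := by
      ext p
      simp only [Finset.mem_filter, Finset.mem_univ, true_and, Finset.mem_product, Finset.mem_singleton]
    rw [h2, Finset.card_product]
    simp

/-- For every instance `D` with item sizes in `(0, S]`, total size
`V(D) > S`, and every `k ≥ 1`, `NFk(D_k) ≤ 2·OPT(D_k) + 1`. -/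
theorem stmt_9 (D : List ℝ) (S : ℝ) (hS : 0 < S)
    (hD : ∀ x ∈ D, 0 < x ∧ x ≤ S) (hV : S < D.sum) (k : ℕ) (hk : 1 ≤ k) :
    NFk S k D ≤ 2 * kOPT S k D + 1 := by
  classical
  set L := (List.replicate k D).flatten with hL
  have hLmem : ∀ x ∈ L, 0 < x ∧ x ≤ S := by
    intro x hx
    rw [hL, List.mem_flatten] at hx
    obtain ⟨l, hl, hxl⟩ := hx
    rw [List.mem_replicate] at hl
    exact hD x (hl.2 ▸ hxl)
  have hLsum : L.sum = (k : ℝ) * D.sum := by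
    rw [hL, List.sum_flatten, List.map_replicate, List.sum_replicate, nsmul_eq_mul]
  have hLpos : S < L.sum := by
    rw [hLsum]
    calc S < D.sum := hV
      _ = 1 * D.sum := (one_mul _).symm
      _ ≤ (k : ℝ) * D.sum := by
          apply mul_le_mul_of_nonneg_right _ (by linarith)
          exact_mod_cast hk
  -- run the invariant
  have hinv := nf_fold_inv S hS L hLmem ((0 : ℕ), S + 1) 0 (Or.inl ⟨rfl, rfl⟩)
  set st' := L.foldl (fun (st : ℕ × ℝ) s =>
      if st.2 + s ≤ S then (st.1, st.2 + s) else (st.1 + 1, s)) ((0 : ℕ), S + 1) with hst'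
  have hNF : NFk S k D = st'.1 := rfl
  rcases hinv with ⟨_, habs⟩ | ⟨hb, hc, hlt⟩
  · exfalso; simp at habs; linarith
  · -- volume bound
    set q := kOPT S k D with hq
    have hqmem : q ∈ {q | ∃ B : Fin q → Finset (Fin D.length),
        (∀ j, ∑ i ∈ B j, D.get i ≤ S) ∧
        (∀ i, (Finset.univ.filter fun j => i ∈ B j).card = k)} :=
      Nat.sInf_mem (kOPT_nonempty S k D hD)
    obtain ⟨B, hload, hcard⟩ := hqmem
    have hvol : (k : ℝ) * D.sum ≤ (q : ℝ) * S :=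
      kOPT_volume S k D hD q B hload hcard
    have key : S * ((st'.1 : ℝ) - 1) < 2 * ((q : ℝ) * S) := by
      calc S * ((st'.1 : ℝ) - 1) < 2 * (0 + L.sum) - st'.2 := hlt
        _ < 2 * L.sum := by linarith
        _ = 2 * ((k : ℝ) * D.sum) := by rw [hLsum]
        _ ≤ 2 * ((q : ℝ) * S) := by linarith
    have : ((st'.1 : ℝ) - 1) < 2 * (q : ℝ) := by
      have := (mul_lt_mul_iff_right₀ hS).mp (by
        calc S * ((st'.1 : ℝ) - 1) < 2 * ((q : ℝ) * S) := key
          _ = S * (2 * (q : ℝ)) := by ring)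
      exact this
    have hlt' : (st'.1 : ℝ) < 2 * (q : ℝ) + 1 := by linarith
    have : st'.1 < 2 * q + 1 := by exact_mod_cast hlt'
    rw [hNF, hq] at *
    omega
end

section
/- Let 0 < ε ≤ 1/2, S > 0, and k ≥ 1, and let D be an instance with item sizes in (0, S]. Suppose some k-times packing of D_k uses B bins and at least B − k of these bins each have total size at least (1−ε)·S. Then B ≤ (1+2ε)·OPT(D_k) + k. Consequently, if the items of size greater than ε·S are packed into L bins and the items of size at most ε·S are then added greedily (each copy placed in an existing bin with enough room not already containing another copy of the same item, opening a new bin only when no such bin exists), the resulting packing of D_k uses at most max{ L, (1+2ε)·OPT(D_k) + k } bins. -/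
/-- One step of First-Fit insertion for `k`-times bin packing: insert (a copy of)
item `i` of size `d i` into the first bin that has enough remaining capacity and
does not already contain another copy of item `i`; open a new bin otherwise. -/
noncomputable def ffInsertF {n : ℕ} (d : Fin n → ℝ) (S : ℝ) (i : Fin n) :
    List (Finset (Fin n)) → List (Finset (Fin n))
  | [] => [{i}]
  | b :: bs =>
      if (∑ j ∈ b, d j) + d i ≤ S ∧ i ∉ b then insert i b :: bs
      else b :: ffInsertF d S i bs

/-- `OPT(D_k)`: the minimum number `q` of bins of a `k`-times packing of the
instance `d : Fin n → ℝ`, i.e. of a `B : Fin q → Finset (Fin n)` with each bin of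
total size at most `S` and each item in exactly `k` bins. -/
noncomputable def kOPTF {n : ℕ} (d : Fin n → ℝ) (S : ℝ) (k : ℕ) : ℕ :=
  sInf {q | ∃ B : Fin q → Finset (Fin n),
    (∀ j, ∑ i ∈ B j, d i ≤ S) ∧
    (∀ i, (Finset.univ.filter fun j => i ∈ B j).card = k)}

/-!
The first part is volume counting: the `q - k` full bins carry at least `(q - k)(1 - ε)S` of the
total size `V(D_k) ≤ S · OPT(D_k)`, and `1 / (1 - ε) ≤ 1 + 2ε` for `ε ≤ 1/2`.
For the greedy part, a small item fits into every bin of load below `(1 - ε)S`, so First-Fit opens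
a new bin only when each such bin already holds one of the at most `k - 1` earlier copies of the
item; right after that at most `k` bins have load below `(1 - ε)S`, and insertions that open no
bin never increase this number. Hence either the final packing has at most `L` bins or it
satisfies the hypothesis of the first part.
-/

open Finset

theorem List.countP_eq_card_filter_univ {α : Type*} (l : List α) (p : α → Prop)
    [DecidablePred p] : l.countP (fun a => p a) = #{j : Fin l.length | p l[j]} := by
  conv_lhs => rw [← List.ofFn_get l, List.ofFn_eq_map, List.countP_map]
  rw [card_def, filter_val, Fin.univ_def, Multiset.filter_coe, Multiset.coe_card,
    List.countP_eq_length_filter]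
  simp [Function.comp_def]

theorem List.countP_cons_le_countP_cons_add {α : Type*} {p q : α → Bool} {a b : α}
    {l l' : List α} {c : ℕ} (hab : p a → q b) (h : l.countP p ≤ l'.countP q + c) :
    (a :: l).countP p ≤ (b :: l').countP q + c := by
  simp only [List.countP_cons]
  split_ifs <;> simp_all <;> omega

theorem sum_sum_eq_card_nsmul_sum {ι κ M : Type*} [Fintype ι] [Fintype κ] [DecidableEq ι]
    [AddCommMonoid M] (B : κ → Finset ι) (d : ι → M) {k : ℕ}
    (hB : ∀ i, #{j | i ∈ B j} = k) :
    ∑ j, ∑ i ∈ B j, d i = k • ∑ i, d i := by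
  rw [sum_comm' (t' := univ) (s' := fun i => {j | i ∈ B j}) (by simp), smul_sum]
  simp [hB]

section Packing

variable {n : ℕ} (d : Fin n → ℝ) (S : ℝ)

theorem exists_packing_kOPTF (hdS : ∀ i, d i ≤ S) (k : ℕ) :
    ∃ B : Fin (kOPTF d S k) → Finset (Fin n),
      (∀ j, ∑ i ∈ B j, d i ≤ S) ∧ ∀ i, #{j | i ∈ B j} = k := by
  -- `k` singleton bins for each item, indexed by `Fin n × Fin k`
  let e := (finProdFinEquiv : Fin n × Fin k ≃ Fin (n * k))
  refine Nat.sInf_mem (s := {q | ∃ B : Fin q → Finset (Fin n), _})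
    ⟨n * k, fun j => {(e.symm j).1}, fun j => by simpa using hdS _, fun i => ?_⟩
  have : ({j | i ∈ ({(e.symm j).1} : Finset (Fin n))} : Finset (Fin (n * k))) =
      univ.image fun x => e (i, x) := by
    ext j
    simp only [mem_singleton, mem_filter, mem_univ, true_and, mem_image]
    constructor
    · rintro rfl
      exact ⟨(e.symm j).2, by simp⟩
    · rintro ⟨x, -, rfl⟩
      simp
  rw [this, card_image_of_injective _ fun x y h => by simpa using e.injective h]
  simp

theorem mul_sum_le_kOPTF_mul (hdS : ∀ i, d i ≤ S) (k : ℕ) :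
    k * ∑ i, d i ≤ kOPTF d S k * S := by
  obtain ⟨B, hload, hcount⟩ := exists_packing_kOPTF d S hdS k
  rw [← nsmul_eq_mul, ← sum_sum_eq_card_nsmul_sum B d hcount]
  simpa using sum_le_sum fun j (_ : j ∈ univ) => hload j

theorem card_le_of_many_full_bins {ε : ℝ} (hS : 0 < S) (hε₀ : 0 ≤ ε) (hε : ε ≤ 1 / 2)
    (hd₀ : ∀ i, 0 ≤ d i) (hdS : ∀ i, d i ≤ S) {k q : ℕ} (B : Fin q → Finset (Fin n))
    (hcount : ∀ i, #{j | i ∈ B j} = k) (T : Finset (Fin q)) (hT : q - k ≤ #T)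
    (hfull : ∀ j ∈ T, (1 - ε) * S ≤ ∑ i ∈ B j, d i) :
    (q : ℝ) ≤ (1 + 2 * ε) * kOPTF d S k + k := by
  have hfullT : #T * (1 - ε) * S ≤ kOPTF d S k * S :=
    calc #T * (1 - ε) * S = ∑ _j ∈ T, (1 - ε) * S := by simp [mul_assoc]
      _ ≤ ∑ j ∈ T, ∑ i ∈ B j, d i := sum_le_sum hfull
      _ ≤ ∑ j, ∑ i ∈ B j, d i :=
        sum_le_sum_of_subset_of_nonneg (subset_univ T) fun j _ _ => sum_nonneg fun i _ => hd₀ i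
      _ = k * ∑ i, d i := by rw [sum_sum_eq_card_nsmul_sum B d hcount, nsmul_eq_mul]
      _ ≤ kOPTF d S k * S := mul_sum_le_kOPTF_mul d S hdS k
  have hT' : (#T : ℝ) * (1 - ε) ≤ kOPTF d S k := le_of_mul_le_mul_right hfullT hS
  -- `(1 + 2ε)(1 - ε) = 1 + ε(1 - 2ε) ≥ 1`
  have hTopt : (#T : ℝ) ≤ (1 + 2 * ε) * kOPTF d S k := by
    have : (0 : ℝ) ≤ 1 - 2 * ε := by linarith
    nlinarith [mul_nonneg (Nat.cast_nonneg (α := ℝ) #T) (mul_nonneg hε₀ this)]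
  have hq : (q : ℝ) ≤ #T + k := by exact_mod_cast (by omega : q ≤ #T + k)
  linarith

theorem length_le_of_countP_load_lt_le {ε : ℝ} (hS : 0 < S) (hε₀ : 0 ≤ ε) (hε : ε ≤ 1 / 2)
    (hd₀ : ∀ i, 0 ≤ d i) (hdS : ∀ i, d i ≤ S) {k : ℕ} (bs : List (Finset (Fin n)))
    (hcount : ∀ i, bs.countP (fun b => i ∈ b) = k)
    (hlight : bs.countP (fun b => ∑ i ∈ b, d i < (1 - ε) * S) ≤ k) :
    (bs.length : ℝ) ≤ (1 + 2 * ε) * kOPTF d S k + k := by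
  rw [List.countP_eq_card_filter_univ] at hlight
  refine card_le_of_many_full_bins d S hS hε₀ hε hd₀ hdS (fun j => bs[j])
    (fun i => by rw [← hcount i, List.countP_eq_card_filter_univ])
    {j | ¬ ∑ i ∈ bs[j], d i < (1 - ε) * S} ?_ (fun j hj => not_lt.1 (mem_filter.1 hj).2)
  have := card_filter_add_card_filter_not (s := (univ : Finset (Fin bs.length)))
    (fun j => ∑ i ∈ bs[j], d i < (1 - ε) * S)
  rw [card_univ, Fintype.card_fin] at this
  omega

end Packing

section FirstFit

variable {n : ℕ} (d : Fin n → ℝ) (S : ℝ)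

theorem countP_mem_ffInsertF (i i' : Fin n) (bs : List (Finset (Fin n))) :
    (ffInsertF d S i bs).countP (fun b => i' ∈ b) =
      bs.countP (fun b => i' ∈ b) + if i = i' then 1 else 0 := by
  induction bs with
  | nil => by_cases h : i = i' <;> simp [ffInsertF, h, eq_comm]
  | cons a bs ih =>
    by_cases hfit : ∑ j ∈ a, d j + d i ≤ S ∧ i ∉ a
    · rw [ffInsertF, if_pos hfit]
      by_cases h : i = i'
      · subst h
        simp [hfit.2]
      · simp [List.countP_cons, Ne.symm h, h]
    · rw [ffInsertF, if_neg hfit, List.countP_cons, List.countP_cons, ih]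
      omega

/-- Item `i` fits into every bin of load below `t`, so a new bin is opened only when every such
bin already contains `i`. -/
theorem countP_load_lt_ffInsertF_le {i : Fin n} {t : ℝ} (hdi₀ : 0 ≤ d i) (hdi : d i + t ≤ S)
    (bs : List (Finset (Fin n))) :
    ((ffInsertF d S i bs).length = bs.length ∧
      (ffInsertF d S i bs).countP (fun b => ∑ j ∈ b, d j < t) ≤
        bs.countP (fun b => ∑ j ∈ b, d j < t)) ∨
    (ffInsertF d S i bs).countP (fun b => ∑ j ∈ b, d j < t) ≤
      bs.countP (fun b => i ∈ b) + 1 := by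
  induction bs with
  | nil => exact Or.inr (by simp [ffInsertF]; split_ifs <;> simp)
  | cons a bs ih =>
    unfold ffInsertF
    split_ifs with hfit
    · refine Or.inl ⟨by simp, List.countP_cons_le_countP_cons_add (c := 0) ?_ le_rfl⟩
      simp only [decide_eq_true_eq, sum_insert hfit.2]
      intro h
      linarith
    · have hfull : ∑ j ∈ a, d j < t → i ∈ a := fun h => by
        by_contra hi; exact hfit ⟨by linarith, hi⟩
      rcases ih with ⟨hlen, hle⟩ | hle
      · exact Or.inl ⟨by simp [hlen], List.countP_cons_le_countP_cons_add (c := 0) id hle⟩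
      · exact Or.inr (List.countP_cons_le_countP_cons_add (by simpa using hfull) hle)

theorem countP_mem_foldl_ffInsertF (ord : List (Fin n)) (bs : List (Finset (Fin n)))
    (i' : Fin n) :
    (ord.foldl (fun bs i => ffInsertF d S i bs) bs).countP (fun b => i' ∈ b) =
      bs.countP (fun b => i' ∈ b) + ord.count i' := by
  induction ord generalizing bs with
  | nil => simp
  | cons i ord ih =>
    rw [List.foldl_cons, ih, countP_mem_ffInsertF, List.count_cons]
    simp only [beq_iff_eq]
    omega

theorem countP_load_lt_le_or_length_le_foldl_ffInsertF {t : ℝ} {k L : ℕ} (ord : List (Fin n))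
    (hord : ∀ i ∈ ord, 0 ≤ d i ∧ d i + t ≤ S) {bs : List (Finset (Fin n))}
    (hcount : ∀ i ∈ ord, bs.countP (fun b => i ∈ b) + ord.count i ≤ k)
    (hbs : bs.countP (fun b => ∑ j ∈ b, d j < t) ≤ k ∨ bs.length ≤ L) :
    (ord.foldl (fun bs i => ffInsertF d S i bs) bs).countP (fun b => ∑ j ∈ b, d j < t) ≤ k ∨
      (ord.foldl (fun bs i => ffInsertF d S i bs) bs).length ≤ L := by
  induction ord generalizing bs with
  | nil => exact hbs
  | cons i ord ih =>
    obtain ⟨hdi₀, hdi⟩ := hord i List.mem_cons_self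
    have hi : bs.countP (fun b => i ∈ b) + 1 ≤ k := by
      have := hcount i List.mem_cons_self
      rw [List.count_cons_self] at this
      omega
    refine ih (fun i' hi' => hord i' (List.mem_cons_of_mem i hi')) (fun i' hi' => ?_) ?_
    · have := hcount i' (List.mem_cons_of_mem i hi')
      rw [List.count_cons] at this
      simp only [beq_iff_eq] at this
      rw [countP_mem_ffInsertF]
      omega
    · rcases countP_load_lt_ffInsertF_le d S hdi₀ hdi bs with ⟨hlen, hle⟩ | hle
      · rw [hlen]
        exact hbs.imp_left hle.trans
      · exact Or.inl (hle.trans hi)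

end FirstFit

theorem stmt_11_general {n : ℕ} (d : Fin n → ℝ) (S ε : ℝ) (hS : 0 < S)
    (hε : 0 < ε ∧ ε ≤ 1/2) (hd : ∀ i, 0 < d i ∧ d i ≤ S) (k : ℕ) :
    (∀ (q : ℕ) (B : Fin q → Finset (Fin n)),
      (∀ j, ∑ i ∈ B j, d i ≤ S) →
      (∀ i, (Finset.univ.filter fun j => i ∈ B j).card = k) →
      (∃ T : Finset (Fin q), q - k ≤ T.card ∧
        ∀ j ∈ T, (1 - ε) * S ≤ ∑ i ∈ B j, d i) →
      (q : ℝ) ≤ (1 + 2*ε) * (kOPTF d S k : ℝ) + k) ∧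
    (∀ (L : ℕ) (bins0 : List (Finset (Fin n))) (order : List (Fin n)),
      bins0.length = L →
      (∀ b ∈ bins0, ∑ i ∈ b, d i ≤ S) →
      (∀ i : Fin n, ε * S < d i → (bins0.countP fun b => decide (i ∈ b)) = k) →
      (∀ i : Fin n, d i ≤ ε * S → (bins0.countP fun b => decide (i ∈ b)) = 0) →
      (∀ i : Fin n, d i ≤ ε * S → order.count i = k) →
      (∀ i : Fin n, ε * S < d i → order.count i = 0) →
      ((order.foldl (fun bs i => ffInsertF d S i bs) bins0).length : ℝ) ≤
        max (L : ℝ) ((1 + 2*ε) * (kOPTF d S k : ℝ) + k)) := by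
  have hd₀ i : 0 ≤ d i := (hd i).1.le
  have hdS i : d i ≤ S := (hd i).2
  refine ⟨fun q B _ hcount ⟨T, hT, hfull⟩ =>
    card_le_of_many_full_bins d S hS hε.1.le hε.2 hd₀ hdS B hcount T hT hfull, ?_⟩
  rintro L bins0 order rfl - hlarge₀ hsmall₀ hsmall hlarge
  have hord (i) (hi : i ∈ order) : d i ≤ ε * S :=
    not_lt.1 fun h => (List.count_pos_iff.2 hi).ne' (hlarge i h)
  have hcount (i) : (order.foldl (fun bs i => ffInsertF d S i bs) bins0).countP
      (fun b => i ∈ b) = k := by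
    rw [countP_mem_foldl_ffInsertF]
    rcases le_or_gt (d i) (ε * S) with h | h
    · simp [hsmall₀ i h, hsmall i h]
    · simp [hlarge₀ i h, hlarge i h]
  rcases countP_load_lt_le_or_length_le_foldl_ffInsertF d S (t := (1 - ε) * S) (k := k)
    (L := bins0.length) order
    (fun i hi => ⟨hd₀ i, by linarith [hord i hi]⟩)
    (fun i hi => by simp [hsmall₀ i (hord i hi), hsmall i (hord i hi)]) (Or.inr le_rfl)
    with hlight | hlen
  · exact (length_le_of_countP_load_lt_le d S hS hε.1.le hε.2 hd₀ hdS _ hcount hlight).trans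
      (le_max_right _ _)
  · exact (Nat.cast_le.2 hlen).trans (le_max_left _ _)

/-- Let `0 < ε ≤ 1/2`, `S > 0`, `k ≥ 1` and item sizes in `(0,S]`.
(1) If a `k`-times packing of `D_k` uses `B` bins, at least `B - k` of which have
total size at least `(1-ε)·S`, then `B ≤ (1+2ε)·OPT(D_k) + k`.
(2) Consequently, if the large items (size `> ε·S`) are packed (`k` copies each)
into `L` bins and the small items (size `≤ ε·S`) are then added greedily by
First-Fit insertion (each copy into an existing bin with enough room not already
containing another copy of the same item, opening a bin only when needed), the
resulting packing of `D_k` uses at most `max{L, (1+2ε)·OPT(D_k) + k}` bins. -/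
theorem stmt_11 {n : ℕ} (d : Fin n → ℝ) (S ε : ℝ) (hS : 0 < S)
    (hε : 0 < ε ∧ ε ≤ 1/2) (hd : ∀ i, 0 < d i ∧ d i ≤ S) (k : ℕ) (hk : 1 ≤ k) :
    (∀ (q : ℕ) (B : Fin q → Finset (Fin n)),
      (∀ j, ∑ i ∈ B j, d i ≤ S) →
      (∀ i, (Finset.univ.filter fun j => i ∈ B j).card = k) →
      (∃ T : Finset (Fin q), q - k ≤ T.card ∧
        ∀ j ∈ T, (1 - ε) * S ≤ ∑ i ∈ B j, d i) →
      (q : ℝ) ≤ (1 + 2*ε) * (kOPTF d S k : ℝ) + k) ∧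
    (∀ (L : ℕ) (bins0 : List (Finset (Fin n))) (order : List (Fin n)),
      bins0.length = L →
      (∀ b ∈ bins0, ∑ i ∈ b, d i ≤ S) →
      (∀ i : Fin n, ε * S < d i → (bins0.countP fun b => decide (i ∈ b)) = k) →
      (∀ i : Fin n, d i ≤ ε * S → (bins0.countP fun b => decide (i ∈ b)) = 0) →
      (∀ i : Fin n, d i ≤ ε * S → order.count i = k) →
      (∀ i : Fin n, ε * S < d i → order.count i = 0) →
      ((order.foldl (fun bs i => ffInsertF d S i bs) bins0).length : ℝ) ≤
        max (L : ℝ) ((1 + 2*ε) * (kOPTF d S k : ℝ) + k)) :=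
  stmt_11_general d S ε hS hε hd k
end

section
/- Fix a capacity S > 0, item sizes c_1, …, c_m > 0 with c_i ≤ S, and multiplicities n_1, …, n_m ≥ 1, so the instance D has n_i items of size c_i. A feasible configuration is a vector a ∈ ℕ^m with a_i ≤ n_i for all i and ∑_i a_i·c_i ≤ S. Let k ≥ 1 and suppose x assigns a nonnegative integer x_τ to each feasible configuration τ such that ∑_τ x_τ·τ_i = k·n_i for every i ∈ {1,…,m}. Then there exists a k-times packing of D into exactly ∑_τ x_τ bins such that for each feasible configuration τ exactly x_τ bins contain, for each i, precisely τ_i items of size c_i, and no bin contains two copies of the same item. -/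
open Finset

/-- Counting elements satisfying `p` in a range split into consecutive blocks. -/
lemma interval_count (g : ℕ → ℕ) (p : ℕ → Prop) [DecidablePred p] (N : ℕ) :
    ((Finset.range (∑ j ∈ Finset.range N, g j)).filter p).card
      = ∑ j ∈ Finset.range N,
          ((Finset.range (g j)).filter fun t => p ((∑ j' ∈ Finset.range j, g j') + t)).card := by
  induction N with
  | zero => simp
  | succ N ih =>
    rw [Finset.sum_range_succ, Finset.range_add, Finset.filter_union,
      Finset.card_union_of_disjoint, ih, Finset.sum_range_succ, Finset.filter_map,
      Finset.card_map]
    · rfl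
    · refine Finset.disjoint_left.2 ?_
      intro a ha hb
      have h1 : a < ∑ j' ∈ Finset.range N, g j' := Finset.mem_range.1 (Finset.mem_filter.1 ha).1
      obtain ⟨b, _, rfl⟩ := Finset.mem_map.1 (Finset.mem_filter.1 hb).1
      simp only [addLeftEmbedding_apply] at h1
      omega

lemma mod_count (n r k : ℕ) (hr : r < n) :
    ((Finset.range (k * n)).filter fun s => s % n = r).card = k := by
  induction k with
  | zero => simp
  | succ k ih =>
    rw [Nat.succ_mul, Finset.range_add, Finset.filter_union,
      Finset.card_union_of_disjoint, ih, Finset.filter_map, Finset.card_map]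
    · have : (Finset.filter (fun t => ((fun s => s % n = r) ∘ ⇑(addLeftEmbedding (k * n))) t)
          (Finset.range n)) = {r} := by
        ext t
        simp only [Finset.mem_filter, Finset.mem_range, Function.comp_apply,
          addLeftEmbedding_apply, Finset.mem_singleton]
        constructor
        · rintro ⟨ht, h⟩
          rw [Nat.add_comm, Nat.add_mul_mod_self_right, Nat.mod_eq_of_lt ht] at h
          exact h
        · rintro rfl
          refine ⟨hr, ?_⟩
          rw [Nat.add_comm, Nat.add_mul_mod_self_right, Nat.mod_eq_of_lt hr]
      rw [this, Finset.card_singleton]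
    · refine Finset.disjoint_left.2 ?_
      intro a ha hb
      have h1 : a < k * n := Finset.mem_range.1 (Finset.mem_filter.1 ha).1
      obtain ⟨b, _, rfl⟩ := Finset.mem_map.1 (Finset.mem_filter.1 hb).1
      simp only [addLeftEmbedding_apply] at h1
      omega

lemma mod_inj {n P t1 t2 : ℕ} (h1 : t1 < n) (h2 : t2 < n)
    (h : (P + t1) % n = (P + t2) % n) : t1 = t2 := by
  have : t1 % n = t2 % n := Nat.ModEq.add_left_cancel' P h
  rwa [Nat.mod_eq_of_lt h1, Nat.mod_eq_of_lt h2] at this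

section aux

variable {m : ℕ} (T : Finset (Fin m → ℕ)) (x : (Fin m → ℕ) → ℕ)

noncomputable def myE : Fin (∑ τ ∈ T, x τ) ≃ Σ a : {τ // τ ∈ T}, Fin (x a.1) := by
  refine (Fintype.equivFinOfCardEq ?_).symm
  rw [Fintype.card_sigma]
  simp only [Fintype.card_fin]
  rw [← Finset.sum_attach T (fun τ => x τ)]
  rfl

noncomputable def myF (j : Fin (∑ τ ∈ T, x τ)) : Fin m → ℕ := ((myE T x) j).1.1

lemma myF_mem (j : Fin (∑ τ ∈ T, x τ)) : myF T x j ∈ T := ((myE T x) j).1.2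

lemma sum_myF {M : Type*} [AddCommMonoid M] (F : (Fin m → ℕ) → M) :
    ∑ j, F (myF T x j) = ∑ τ ∈ T, x τ • F τ := by
  have h1 : ∑ j, F (myF T x j) = ∑ p : Σ a : {τ // τ ∈ T}, Fin (x a.1), F p.1.1 :=
    Equiv.sum_comp (myE T x) (fun p => F p.1.1)
  rw [h1, ← Finset.univ_sigma_univ, Finset.sum_sigma]
  simp only [Finset.sum_const, Finset.card_univ, Fintype.card_fin]
  rw [← Finset.sum_attach T (fun τ => x τ • F τ)]
  rfl

end aux
/-- Fix capacity `S > 0`, item sizes `c : Fin m → ℝ` with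
`0 < c i ≤ S`, and multiplicities `nn : Fin m → ℕ` with `nn i ≥ 1` (so the
instance has `nn i` items of size `c i`; the items are the pairs
`⟨i, copy⟩ : (i : Fin m) × Fin (nn i)`).  A feasible configuration is a vector
`τ : Fin m → ℕ` with `τ i ≤ nn i` and `∑ τ i · c i ≤ S`.  If `x` assigns a
nonnegative integer to each feasible configuration `τ ∈ T` with
`∑_τ x τ · τ i = k · nn i` for every `i`, then there is a `k`-times packing into
exactly `∑_τ x τ` bins realizing each configuration `τ` in exactly `x τ` bins:
bin `j` has configuration `f j ∈ T`, contains precisely `f j i` items of size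
`c i` for each `i`, has total size at most `S`, no bin contains two copies of the
same item (bins are finite sets of items), and each item lies in exactly `k` bins. -/
theorem stmt_12 (m : ℕ) (S : ℝ) (hS : 0 < S) (c : Fin m → ℝ)
    (hc : ∀ i, 0 < c i ∧ c i ≤ S) (nn : Fin m → ℕ) (hnn : ∀ i, 1 ≤ nn i)
    (k : ℕ) (hk : 1 ≤ k) (T : Finset (Fin m → ℕ))
    (hT : ∀ τ ∈ T, (∀ i, τ i ≤ nn i) ∧ ∑ i, (τ i : ℝ) * c i ≤ S)
    (x : (Fin m → ℕ) → ℕ)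
    (hx : ∀ i, ∑ τ ∈ T, x τ * τ i = k * nn i) :
    ∃ B : Fin (∑ τ ∈ T, x τ) → Finset ((i : Fin m) × Fin (nn i)),
      ∃ f : Fin (∑ τ ∈ T, x τ) → (Fin m → ℕ),
        (∀ j, f j ∈ T) ∧
        (∀ τ ∈ T, (Finset.univ.filter fun j => f j = τ).card = x τ) ∧
        (∀ j i, ((B j).filter fun it => it.1 = i).card = f j i) ∧
        (∀ j, ∑ it ∈ B j, c it.1 ≤ S) ∧
        (∀ it : (i : Fin m) × Fin (nn i),
          (Finset.univ.filter fun j => it ∈ B j).card = k) := by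
  classical
  set N := ∑ τ ∈ T, x τ with hN
  set f : Fin N → Fin m → ℕ := myF T x with hf
  have hfT : ∀ j, f j ∈ T := myF_mem T x
  have hfle : ∀ j i, f j i ≤ nn i := fun j i => (hT _ (hfT j)).1 i
  -- extended version of f indexed by ℕ
  set g : Fin m → ℕ → ℕ := fun i j => if h : j < N then f ⟨j, h⟩ i else 0 with hg
  set P : Fin m → ℕ → ℕ := fun i j => ∑ j' ∈ Finset.range j, g i j' with hP
  have hgf : ∀ (j : Fin N) i, g i j.1 = f j i := by
    intro j i; simp [hg, j.2]
  have hnpos : ∀ i, 0 < nn i := fun i => hnn i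
  -- total of g-blocks
  have hgsum : ∀ i, ∑ j ∈ Finset.range N, g i j = k * nn i := by
    intro i
    rw [← Fin.sum_univ_eq_sum_range (fun j => g i j) N]
    have : ∑ j : Fin N, g i j.1 = ∑ j : Fin N, f j i := by
      exact Finset.sum_congr rfl fun j _ => hgf j i
    rw [this, hf, sum_myF T x (fun τ => τ i)]
    rw [← hx i]
    exact Finset.sum_congr rfl fun τ _ => by simp [smul_eq_mul]
  -- the copy sets
  have hmemlt : ∀ (j : Fin N) (i : Fin m),
      ∀ a ∈ (Finset.range (f j i)).image fun t => (P i j.1 + t) % nn i, a < nn i := by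
    intro j i a ha
    obtain ⟨t, _, rfl⟩ := Finset.mem_image.1 ha
    exact Nat.mod_lt _ (hnpos i)
  set Cfin : Fin N → (i : Fin m) → Finset (Fin (nn i)) := fun j i =>
    Finset.attachFin ((Finset.range (f j i)).image fun t => (P i j.1 + t) % nn i)
      (hmemlt j i) with hC
  set B : Fin N → Finset ((i : Fin m) × Fin (nn i)) := fun j =>
    Finset.univ.filter fun it => it.2 ∈ Cfin j it.1 with hB
  have hCcard : ∀ (j : Fin N) (i : Fin m), (Cfin j i).card = f j i := by
    intro j i
    rw [hC]
    rw [Finset.card_attachFin, Finset.card_image_of_injOn, Finset.card_range]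
    intro t1 h1 t2 h2 h
    simp only [Finset.coe_range, Set.mem_Iio] at h1 h2
    exact mod_inj (lt_of_lt_of_le h1 (hfle j i)) (lt_of_lt_of_le h2 (hfle j i)) h
  have hBfilter : ∀ (j : Fin N) (i : Fin m),
      (B j).filter (fun it => it.1 = i) = (Cfin j i).map ⟨Sigma.mk i, sigma_mk_injective⟩ := by
    intro j i
    ext ⟨i', r⟩
    simp only [hB, Finset.mem_filter, Finset.mem_univ, true_and, Finset.mem_map,
      Function.Embedding.coeFn_mk]
    constructor
    · rintro ⟨h1, rfl⟩
      exact ⟨r, h1, rfl⟩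
    · rintro ⟨r', h', heq⟩
      obtain ⟨rfl, hr⟩ := Sigma.mk.inj_iff.1 heq
      obtain rfl := eq_of_heq hr
      exact ⟨h', rfl⟩
  refine ⟨B, f, hfT, ?_, ?_, ?_, ?_⟩
  · -- configuration counts
    intro τ hτ
    rw [Finset.card_filter, hf, sum_myF T x (fun τ' => if τ' = τ then 1 else 0)]
    have : ∀ τ' ∈ T, (x τ' • if τ' = τ then 1 else 0) = if τ' = τ then x τ' else 0 := by
      intro τ' _; split <;> simp
    rw [Finset.sum_congr rfl this, Finset.sum_ite_eq' T τ (fun τ' => x τ'), if_pos hτ]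
  · -- per-bin per-type counts
    intro j i
    rw [hBfilter j i, Finset.card_map, hCcard]
  · -- size bound
    intro j
    have hfib := Finset.sum_fiberwise_of_maps_to (s := B j)
      (t := (Finset.univ : Finset (Fin m))) (g := fun it => it.1)
      (fun it _ => Finset.mem_univ it.1) (fun it => c it.1)
    rw [← hfib]
    refine le_trans (le_of_eq ?_) (hT _ (hfT j)).2
    refine Finset.sum_congr rfl fun i _ => ?_
    have h1 : ∀ it ∈ (B j).filter (fun it => it.1 = i), c it.1 = c i := by
      rintro it hit
      rw [(Finset.mem_filter.1 hit).2]
    rw [Finset.sum_congr rfl h1, Finset.sum_const, hBfilter j i, Finset.card_map, hCcard]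
    exact nsmul_eq_mul _ _
  · -- each item is in exactly k bins
    rintro ⟨i, r⟩
    have hmem : ∀ j : Fin N, (⟨i, r⟩ : (i : Fin m) × Fin (nn i)) ∈ B j ↔
        ((Finset.range (f j i)).filter fun t => (P i j.1 + t) % nn i = r.1).Nonempty := by
      intro j
      simp only [hB, Finset.mem_filter, Finset.mem_univ, true_and, hC,
        Finset.mem_attachFin, Finset.mem_image, Finset.Nonempty, Finset.mem_filter]
    have hcard1 : ∀ j : Fin N,
        ((Finset.range (f j i)).filter fun t => (P i j.1 + t) % nn i = r.1).card ≤ 1 := by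
      intro j
      refine Finset.card_le_one.2 fun t1 h1 t2 h2 => ?_
      obtain ⟨ht1, e1⟩ := Finset.mem_filter.1 h1
      obtain ⟨ht2, e2⟩ := Finset.mem_filter.1 h2
      exact mod_inj (lt_of_lt_of_le (Finset.mem_range.1 ht1) (hfle j i))
        (lt_of_lt_of_le (Finset.mem_range.1 ht2) (hfle j i)) (e1.trans e2.symm)
    calc (Finset.univ.filter fun j => (⟨i, r⟩ : (i : Fin m) × Fin (nn i)) ∈ B j).card
        = ∑ j : Fin N,
            ((Finset.range (f j i)).filter fun t => (P i j.1 + t) % nn i = r.1).card := by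
          rw [Finset.card_filter]
          refine Finset.sum_congr rfl fun j _ => ?_
          by_cases h : (⟨i, r⟩ : (i : Fin m) × Fin (nn i)) ∈ B j
          · rw [if_pos h]
            have := (hmem j).1 h
            have hpos := Finset.card_pos.2 this
            have hle := hcard1 j
            omega
            -- card ≥ 1 and ≤ 1
          · rw [if_neg h]
            have : ¬ ((Finset.range (f j i)).filter
                fun t => (P i j.1 + t) % nn i = r.1).Nonempty := fun hn => h ((hmem j).2 hn)
            rw [Finset.not_nonempty_iff_eq_empty.1 this, Finset.card_empty]
      _ = ∑ j ∈ Finset.range N,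
            ((Finset.range (g i j)).filter fun t => (P i j + t) % nn i = r.1).card := by
          rw [← Fin.sum_univ_eq_sum_range
            (fun j => ((Finset.range (g i j)).filter fun t => (P i j + t) % nn i = r.1).card) N]
          exact Finset.sum_congr rfl fun j _ => by rw [hgf j i]
      _ = ((Finset.range (∑ j ∈ Finset.range N, g i j)).filter fun s => s % nn i = r.1).card := by
          rw [interval_count (g i) (fun s => s % nn i = r.1) N]
      _ = k := by rw [hgsum i]; exact mod_count (nn i) r.1 k r.2
end

section
/- Let D be a bin-packing instance with item sizes in (0, S] sorted in nonincreasing order, and let g ≥ 1 be an integer. Partition D into consecutive groups of cardinality g (the last group possibly smaller); let U be the instance obtained by rounding each item size up to the maximum size in its group, let U' consist of the first group of U (the g largest items) and U'' of the remaining groups of U. Then OPT(U'') ≤ OPT(D) ≤ OPT(U'') + g, where OPT denotes the classical (1-times) bin-packing optimum with capacity S. -/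
/-!
Rounding up within groups of size `g` makes the `k`-th item of `U''` (item `k + g` of `U`) no
larger than the `k`-th item of the sorted instance `D`, so `U''` embeds into `D` with smaller
sizes and `OPT(U'') ≤ OPT(D)`. Conversely, item `i ≥ g` of `D` is no larger than item `i - g`
of `U''`, and the `g` items `i < g` are no larger than `S`; hence `D` is dominated by `U''`
together with `g` items of size `S`, and packing those in `g` extra bins gives
`OPT(D) ≤ OPT(U'') + g`.
-/

open Finset

def IsPacking {n q : ℕ} (d : Fin n → ℝ) (S : ℝ) (a : Fin n → Fin q) : Prop :=
  ∀ j, ∑ i with a i = j, d i ≤ S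

section
variable {n m q : ℕ} {d : Fin n → ℝ} {S : ℝ}

/-- Since every item lies in exactly one bin, a packing is the same as a bin assignment. -/
lemma kOPTF_one_eq_sInf (d : Fin n → ℝ) (S : ℝ) :
    kOPTF d S 1 = sInf {q | ∃ a : Fin n → Fin q, IsPacking d S a} := by
  classical
  unfold kOPTF
  congr 1
  ext q
  constructor
  · rintro ⟨B, hload, hcover⟩
    choose a ha using fun i => card_eq_one.mp (hcover i)
    have hbin : ∀ j, ({i | a i = j} : Finset (Fin n)) = B j := by
      intro j
      ext i
      have := congrArg (j ∈ ·) (ha i)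
      simp only [mem_filter, mem_univ, true_and, mem_singleton] at this ⊢
      rw [eq_comm, ← this]
    exact ⟨a, fun j => hbin j ▸ hload j⟩
  · rintro ⟨a, ha⟩
    refine ⟨fun j => {i | a i = j}, ha, fun i => card_eq_one.mpr ⟨a i, ?_⟩⟩
    ext j
    simp [eq_comm]

lemma kOPTF_one_le {a : Fin n → Fin q} (ha : IsPacking d S a) : kOPTF d S 1 ≤ q := by
  rw [kOPTF_one_eq_sInf]
  exact Nat.sInf_le ⟨a, ha⟩

lemma isPacking_id (hdS : ∀ i, d i ≤ S) : IsPacking d S id := by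
  intro j
  simpa [filter_eq'] using hdS j

lemma kOPTF_one_le_card (hdS : ∀ i, d i ≤ S) : kOPTF d S 1 ≤ n :=
  kOPTF_one_le (isPacking_id hdS)

lemma exists_isPacking_kOPTF (hdS : ∀ i, d i ≤ S) :
    ∃ a : Fin n → Fin (kOPTF d S 1), IsPacking d S a := by
  have hmem := Nat.sInf_mem (s := {q | ∃ a : Fin n → Fin q, IsPacking d S a})
    ⟨n, id, isPacking_id hdS⟩
  rwa [← kOPTF_one_eq_sInf] at hmem

lemma IsPacking.comp {e : Fin m → ℝ} {a : Fin n → Fin q} (ha : IsPacking d S a)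
    (hd0 : ∀ i, 0 ≤ d i) {f : Fin m → Fin n} (hf : Function.Injective f)
    (hed : ∀ k, e k ≤ d (f k)) : IsPacking e S (a ∘ f) := by
  classical
  intro j
  calc ∑ k with a (f k) = j, e k
      ≤ ∑ k with a (f k) = j, d (f k) := sum_le_sum fun k _ => hed k
    _ = ∑ i ∈ image f {k | a (f k) = j}, d i := (sum_image fun _ _ _ _ h => hf h).symm
    _ ≤ ∑ i with a i = j, d i := by
        refine sum_le_sum_of_subset_of_nonneg ?_ fun i _ _ => hd0 i
        intro i hi
        obtain ⟨k, hk, rfl⟩ := mem_image.mp hi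
        simpa using hk
    _ ≤ S := ha j

lemma kOPTF_one_mono {e : Fin m → ℝ} (hd0 : ∀ i, 0 ≤ d i) (hdS : ∀ i, d i ≤ S)
    {f : Fin m → Fin n} (hf : Function.Injective f) (hed : ∀ k, e k ≤ d (f k)) :
    kOPTF e S 1 ≤ kOPTF d S 1 := by
  obtain ⟨a, ha⟩ := exists_isPacking_kOPTF hdS
  exact kOPTF_one_le (ha.comp hd0 hf hed)

lemma IsPacking.append {m₁ m₂ q₁ q₂ : ℕ} {d₁ : Fin m₁ → ℝ} {d₂ : Fin m₂ → ℝ}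
    {a₁ : Fin m₁ → Fin q₁} {a₂ : Fin m₂ → Fin q₂}
    (h₁ : IsPacking d₁ S a₁) (h₂ : IsPacking d₂ S a₂) :
    IsPacking (Fin.append d₁ d₂) S (Fin.append (Fin.castAdd q₂ ∘ a₁) (Fin.natAdd q₁ ∘ a₂)) := by
  classical
  intro j
  rw [sum_filter, Fin.sum_univ_add]
  simp only [Fin.append_left, Fin.append_right, Function.comp_apply]
  have hne : ∀ (x : Fin q₁) (y : Fin q₂), Fin.castAdd q₂ x ≠ Fin.natAdd q₁ y := by
    intro x y h
    have := congrArg Fin.val h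
    simp only [Fin.val_castAdd, Fin.val_natAdd] at this
    omega
  refine Fin.addCases (fun j => ?_) (fun j => ?_) j
  · simpa [Fin.castAdd_inj, (hne _ _).symm, ← sum_filter] using h₁ j
  · simpa [Fin.natAdd_inj, hne, ← sum_filter] using h₂ j

lemma kOPTF_one_append_le {m₁ m₂ : ℕ} {d₁ : Fin m₁ → ℝ} {d₂ : Fin m₂ → ℝ}
    (h₁ : ∀ i, d₁ i ≤ S) (h₂ : ∀ i, d₂ i ≤ S) :
    kOPTF (Fin.append d₁ d₂) S 1 ≤ kOPTF d₁ S 1 + kOPTF d₂ S 1 := by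
  obtain ⟨a₁, ha₁⟩ := exists_isPacking_kOPTF h₁
  obtain ⟨a₂, ha₂⟩ := exists_isPacking_kOPTF h₂
  exact kOPTF_one_le (ha₁.append ha₂)

/-- `d` is dominated by `e` preceded by `g` items of size `S`, which take `g` bins of their own. -/
lemma kOPTF_one_le_add {g : ℕ} {e : Fin (n - g) → ℝ} (hS : 0 ≤ S) (hdS : ∀ i, d i ≤ S)
    (he0 : ∀ k, 0 ≤ e k) (heS : ∀ k, e k ≤ S)
    (hde : ∀ k : Fin (n - g), d ⟨k + g, Nat.add_lt_of_lt_sub k.isLt⟩ ≤ e k) :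
    kOPTF d S 1 ≤ kOPTF e S 1 + g := by
  set padded := Fin.append (fun _ : Fin g => S) e
  have hpad0 : ∀ i, 0 ≤ padded i :=
    Fin.addCases (fun _ => by simpa [padded] using hS) (fun _ => by simpa [padded] using he0 _)
  have hpadS : ∀ i, padded i ≤ S :=
    Fin.addCases (fun _ => by simp [padded]) (fun _ => by simpa [padded] using heS _)
  have hdpad : ∀ i : Fin n, d i ≤ padded (Fin.castLE (by omega) i) := by
    intro i
    by_cases hi : i.val < g
    · rw [show Fin.castLE _ i = Fin.castAdd (n - g) ⟨i, hi⟩ from rfl]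
      simpa only [padded, Fin.append_left] using hdS i
    · rw [show Fin.castLE _ i = Fin.natAdd g ⟨i - g, by omega⟩ from Fin.ext (by simp; omega)]
      convert hde ⟨i - g, by omega⟩ using 2
      · ext; simp; omega
      · simp only [padded, Fin.append_right]
  calc kOPTF d S 1 ≤ kOPTF padded S 1 := kOPTF_one_mono hpad0 hpadS (Fin.castLE_injective _) hdpad
    _ ≤ kOPTF (fun _ : Fin g => S) S 1 + kOPTF e S 1 := kOPTF_one_append_le (fun _ => le_rfl) heS
    _ ≤ g + kOPTF e S 1 := by grw [kOPTF_one_le_card fun _ => le_rfl]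
    _ = kOPTF e S 1 + g := add_comm _ _

end

/-- linear grouping lemma: Let `D = d : Fin n → ℝ` have sizes in
`(0, S]`, sorted in nonincreasing order, and let `g ≥ 1`.  Partition `D` into
consecutive groups of cardinality `g` (the last group possibly smaller); let `U`
round each item up to the maximum of its group (which sits at index `i/g·g`), let
`U'` be the first group of `U` (the `g` largest items) and `U''` the remaining
groups of `U`.  Then `OPT(U'') ≤ OPT(D) ≤ OPT(U'') + g` for the classical
(1-times) bin-packing optimum with capacity `S`. -/
theorem stmt_15 (S : ℝ) (hS : 0 < S) (n : ℕ) (d : Fin n → ℝ)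
    (hd : ∀ i, 0 < d i ∧ d i ≤ S) (hanti : Antitone d)
    (g : ℕ) (hg : 1 ≤ g)
    (U : Fin n → ℝ)
    (hU : U = fun i => d ⟨i.val / g * g,
      Nat.lt_of_le_of_lt (Nat.div_mul_le_self _ _) i.isLt⟩)
    (U'' : Fin (n - g) → ℝ)
    (hU'' : U'' = fun j => U ⟨j.val + g, by have := j.isLt; omega⟩) :
    kOPTF U'' S 1 ≤ kOPTF d S 1 ∧ kOPTF d S 1 ≤ kOPTF U'' S 1 + g := by
  subst hU'' hU
  have hd0 : ∀ i, 0 ≤ d i := fun i => (hd i).1.le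
  have hdS : ∀ i, d i ≤ S := fun i => (hd i).2
  constructor
  · refine kOPTF_one_mono hd0 hdS (Fin.castLE_injective (Nat.sub_le n g)) fun k => hanti ?_
    -- the group of item `k + g` starts after item `k`
    show k.val ≤ (k.val + g) / g * g
    rw [Nat.add_div_right _ hg, add_mul, one_mul]
    have := Nat.lt_div_mul_add (a := k.val) hg
    omega
  · exact kOPTF_one_le_add hS.le hdS (fun _ => hd0 _) (fun _ => hdS _)
      fun _ => hanti (Nat.div_mul_le_self _ _)
end

section
/- Fix a capacity S > 0 and an instance D having m distinct item sizes c_1, …, c_m ∈ (0, S] with multiplicities n_1, …, n_m ≥ 1, and let k ≥ 1. A feasible configuration is a vector a ∈ ℕ^m with a_i ≤ n_i for all i and ∑_i a_i·c_i ≤ S; let A be the m×t matrix whose columns are the feasible configurations. Let LIN(D_k) be the optimal value of the linear program: minimize 1·x over real vectors x ≥ 0 with A·x = k·n (where n = (n_1,…,n_m)). Then V(D_k) ≤ S·LIN(D_k) ≤ S·OPT(D_k) ≤ S·LIN(D_k) + S·(m + k)/2, where V(D_k) = k·∑_i n_i·c_i is the total size of all item copies. -/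
/-- The `k`-times bin-packing optimum for the instance with `nn i` items of size
`c i` (items are the pairs `⟨i, copy⟩`): the minimum number `q` of bins
`B : Fin q → Finset ((i : Fin m) × Fin (nn i))` with each bin of total size at most
`S` and each item in exactly `k` bins. -/
noncomputable def kOPTSig (m : ℕ) (nn : Fin m → ℕ) (c : Fin m → ℝ) (S : ℝ)
    (k : ℕ) : ℕ :=
  sInf {q | ∃ B : Fin q → Finset ((i : Fin m) × Fin (nn i)),
    (∀ j, ∑ it ∈ B j, c it.1 ≤ S) ∧
    (∀ it : (i : Fin m) × Fin (nn i),
      (Finset.univ.filter fun j => it ∈ B j).card = k)}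

/-- `LIN(D_k)`: the optimal value of the fractional configuration linear program
for `k`-times bin packing: minimize `1·x` over real `x ≥ 0` supported on the
feasible configurations (vectors `a : Fin m → ℕ` with `a i ≤ nn i` and
`∑ a i · c i ≤ S`) subject to `∑_a x a · a i = k · nn i` for every `i`. -/
noncomputable def kLIN (m : ℕ) (nn : Fin m → ℕ) (c : Fin m → ℝ) (S : ℝ)
    (k : ℕ) : ℝ :=
  sInf {v : ℝ | ∃ x : (Fin m → ℕ) → ℝ,
    (∀ a, 0 ≤ x a) ∧
    (∀ a, x a ≠ 0 → (∀ i, a i ≤ nn i) ∧ ∑ i, (a i : ℝ) * c i ≤ S) ∧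
    (Function.support x).Finite ∧
    (∀ i, ∑ᶠ a, x a * (a i : ℝ) = (k : ℝ) * (nn i : ℝ)) ∧
    v = ∑ᶠ a, x a}

/-!
An LP solution costs at least the total volume divided by `S`, since every configuration has size
at most `S`; counting the configurations of the bins of a `k`-times packing gives an LP solution of
cost equal to the number of bins. For the last inequality, conic Carathéodory reduces an LP
solution to one on at most `m` configurations without raising its cost. Rounding its weights down
gives whole bins; the residual items have total size at most `S φ`, where `φ` is the total
fractional weight, and are packed either with one bin per configuration (at most `m` bins) or
greedily with all bins but at most `k` more than half full (at most `2 φ + k` bins). The better of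
the two uses at most `φ + (m + k) / 2` bins. Finally, configurations summing to `k • nn` are
realized as a genuine `k`-times packing by dealing the `k nn i` copies of size `i` out cyclically.
-/

open Finset

section Configurations

variable {ι : Type*} [Fintype ι]

def configSize (c : ι → ℝ) (a : ι → ℕ) : ℝ := ∑ i, (a i : ℝ) * c i

def IsConfig (nn : ι → ℕ) (c : ι → ℝ) (S : ℝ) (a : ι → ℕ) : Prop :=
  a ≤ nn ∧ configSize c a ≤ S

variable {c : ι → ℝ}

@[simp]
theorem configSize_zero : configSize c 0 = 0 := by simp [configSize]

theorem configSize_add (a b : ι → ℕ) :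
    configSize c (a + b) = configSize c a + configSize c b := by
  simp only [configSize, Pi.add_apply, Nat.cast_add, add_mul, sum_add_distrib]

theorem configSize_sub {a b : ι → ℕ} (h : b ≤ a) :
    configSize c (a - b) = configSize c a - configSize c b := by
  rw [eq_sub_iff_add_eq, ← configSize_add, tsub_add_cancel_of_le h]

theorem configSize_mono (hc : ∀ i, 0 ≤ c i) {a b : ι → ℕ} (h : a ≤ b) :
    configSize c a ≤ configSize c b :=
  sum_le_sum fun i _ => mul_le_mul_of_nonneg_right (Nat.cast_le.2 (h i)) (hc i)

theorem configSize_nonneg (hc : ∀ i, 0 ≤ c i) (a : ι → ℕ) : 0 ≤ configSize c a :=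
  configSize_zero (c := c) ▸ configSize_mono hc (zero_le (a := a))

theorem configSize_single [DecidableEq ι] (i : ι) : configSize c (Pi.single i 1) = c i := by
  simp [configSize, Pi.single_apply]

theorem sum_mul_eq_sum_mul_configSize {T : Finset (ι → ℕ)} {y : (ι → ℕ) → ℝ} {w : ι → ℝ}
    (hw : ∀ i, w i = ∑ a ∈ T, y a * a i) :
    ∑ i, w i * c i = ∑ a ∈ T, y a * configSize c a := by
  simp_rw [hw, sum_mul, configSize, mul_sum, mul_assoc]
  exact sum_comm

end Configurations

section Greedy

variable {ι : Type*} [Fintype ι] {nn : ι → ℕ} {c : ι → ℝ} {S : ℝ}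

/-- A smallest sub-configuration of size above `S / 2` has size at most `S`: dropping one of its
items either leaves size at most `S / 2`, or that item alone already has size above `S / 2`. -/
theorem exists_le_configSize_mem_Ioc (hS : 0 ≤ S) (hc : ∀ i, 0 < c i ∧ c i ≤ S) {d : ι → ℕ}
    (hd : S / 2 < configSize c d) :
    ∃ b ≤ d, S / 2 < configSize c b ∧ configSize c b ≤ S := by
  classical
  obtain ⟨b, hb, hmin⟩ := exists_min_image ({b ∈ Iic d | S / 2 < configSize c b})
    (configSize c) ⟨d, by simpa using hd⟩
  simp only [mem_filter, mem_Iic, and_imp] at hb hmin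
  refine ⟨b, hb.1, hb.2, ?_⟩
  obtain ⟨i, hi⟩ : ∃ i, b i ≠ 0 := Function.ne_iff.1 fun hb0 : b = 0 => by
    linarith [hb0 ▸ hb.2, configSize_zero (c := c)]
  have hib : Pi.single i 1 ≤ b := by
    intro j
    rcases eq_or_ne j i with rfl | hj
    · simpa using Nat.one_le_iff_ne_zero.2 hi
    · simp [hj]
  by_cases hci : S / 2 < c i
  · have := hmin _ (hib.trans hb.1) (by rwa [configSize_single])
    rw [configSize_single] at this
    linarith [(hc i).2]
  · have hsub := configSize_sub (c := c) hib
    rw [configSize_single] at hsub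
    have : configSize c (b - Pi.single i 1) ≤ S / 2 := by
      by_contra! hlt
      linarith [hmin _ (tsub_le_self.trans hb.1) hlt, (hc i).1]
    linarith

/-- Greedy packing: while the copies of `r` that fit in one bin, `r ⊓ nn`, have size above `S / 2`,
split off a bin filled to more than `S / 2`; otherwise put all of `r ⊓ nn` into one bin, which
lowers the multiplicity bound `k`. Only the `k` bins of the second kind can be at most half full. -/
theorem exists_configs_sum_eq_card_mul_le (hS : 0 ≤ S) (hc : ∀ i, 0 < c i ∧ c i ≤ S)
    (k : ℕ) (r : ι → ℕ) (hr : r ≤ k • nn) :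
    ∃ R : Multiset (ι → ℕ), (∀ b ∈ R, IsConfig nn c S b) ∧ R.sum = r ∧
      (R.card : ℝ) * S ≤ 2 * configSize c r + k * S := by
  induction hN : k + ∑ i, r i using Nat.strong_induction_on generalizing k r with
  | _ N ih =>
  have hc0 : ∀ i, 0 ≤ c i := fun i => (hc i).1.le
  by_cases hr0 : r = 0
  · subst hr0
    exact ⟨0, by simp, by simp, by simp; positivity⟩
  by_cases hbig : S / 2 < configSize c (r ⊓ nn)
  · obtain ⟨b, hb, hb1, hb2⟩ := exists_le_configSize_mem_Ioc hS hc hbig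
    obtain ⟨hbr, hbn⟩ := le_inf_iff.1 hb
    have hlt : ∑ i, (r - b) i < ∑ i, r i := by
      obtain ⟨i, hi⟩ : ∃ i, b i ≠ 0 := Function.ne_iff.1 fun hb0 : b = 0 => by
        linarith [hb0 ▸ hb1, configSize_zero (c := c)]
      refine sum_lt_sum (fun j _ => tsub_le_self) ⟨i, mem_univ _, ?_⟩
      exact Nat.sub_lt_of_pos_le (Nat.pos_of_ne_zero hi) (hbr i)
    obtain ⟨R, hR, hRsum, hRcard⟩ :=
      ih _ (by omega) k (r - b) (tsub_le_self.trans hr) rfl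
    refine ⟨b ::ₘ R, ?_, by rw [Multiset.sum_cons, hRsum, add_tsub_cancel_of_le hbr], ?_⟩
    · simpa [or_imp, forall_and] using ⟨⟨hbn, hb2⟩, hR⟩
    · rw [configSize_sub hbr] at hRcard
      push_cast [Multiset.card_cons]
      linarith
  · obtain ⟨k, rfl⟩ : ∃ k', k = k' + 1 := by
      refine Nat.exists_eq_add_one.2 (Nat.pos_of_ne_zero fun hk => hr0 ?_)
      subst hk
      simpa using hr
    have hrd : r - r ⊓ nn ≤ k • nn := by
      intro i
      have := hr i
      simp only [Pi.sub_apply, Pi.inf_apply, Pi.smul_apply, smul_eq_mul, add_mul,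
        one_mul] at this ⊢
      omega
    have hle : ∑ i, (r - r ⊓ nn) i ≤ ∑ i, r i := sum_le_sum fun i _ => tsub_le_self
    obtain ⟨R, hR, hRsum, hRcard⟩ := ih _ (by omega) k (r - r ⊓ nn) hrd rfl
    refine ⟨r ⊓ nn ::ₘ R, ?_, by rw [Multiset.sum_cons, hRsum, add_tsub_cancel_of_le inf_le_left], ?_⟩
    · simpa [or_imp, forall_and] using ⟨⟨inf_le_right, by linarith⟩, hR⟩
    · rw [configSize_sub inf_le_left] at hRcard
      have := configSize_nonneg hc0 (r ⊓ nn)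
      push_cast [Multiset.card_cons]
      linarith

end Greedy

theorem exists_le_sum_eq_of_le_sum {ι : Type*} (T : Finset (ι → ℕ)) {r : ι → ℕ}
    (hr : r ≤ ∑ a ∈ T, a) :
    ∃ u : (ι → ℕ) → ι → ℕ, (∀ a ∈ T, u a ≤ a) ∧ ∑ a ∈ T, u a = r := by
  classical
  induction T using Finset.induction_on generalizing r with
  | empty => exact ⟨0, by simp, by simp_all⟩
  | insert a T ha ih =>
    rw [sum_insert ha] at hr
    obtain ⟨u, hu, hsum⟩ := ih (r := r - r ⊓ a) fun i => by
      have := hr i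
      simp only [Pi.sub_apply, Pi.inf_apply, Pi.add_apply] at this ⊢
      omega
    refine ⟨Function.update u a (r ⊓ a), ?_, ?_⟩
    · intro b hb
      rcases eq_or_ne b a with rfl | hba
      · simp
      · simpa [hba] using hu b ((mem_insert.1 hb).resolve_left hba)
    · rw [sum_insert ha, sum_update_of_notMem ha, hsum, Function.update_self,
        add_tsub_cancel_of_le inf_le_left]

section Residual

variable {ι : Type*} [Fintype ι] {nn : ι → ℕ} {c : ι → ℝ} {S : ℝ}

theorem exists_configs_sum_eq_card_eq (hc : ∀ i, 0 ≤ c i) {T : Finset (ι → ℕ)}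
    (hT : ∀ a ∈ T, IsConfig nn c S a) {r : ι → ℕ} (hr : r ≤ ∑ a ∈ T, a) :
    ∃ R : Multiset (ι → ℕ), (∀ b ∈ R, IsConfig nn c S b) ∧ R.sum = r ∧ R.card = T.card := by
  classical
  obtain ⟨u, hu, hsum⟩ := exists_le_sum_eq_of_le_sum T hr
  refine ⟨T.val.map u, ?_, by rw [← sum_eq_multiset_sum, hsum], by simp⟩
  simp only [Multiset.mem_map, forall_exists_index, and_imp, forall_apply_eq_imp_iff₂]
  exact fun a ha => ⟨(hu a ha).trans (hT a ha).1,
    (configSize_mono hc (hu a ha)).trans (hT a ha).2⟩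

/-- The residual demand `r` of a rounded-down solution, with fractional parts `y`, is packed
either with one bin per configuration of `T` or greedily; the better of the two costs at most
the average of `#T` and `2 ∑ y + k`. -/
theorem exists_configs_sum_eq_card_le (hS : 0 < S) (hc : ∀ i, 0 < c i ∧ c i ≤ S)
    {T : Finset (ι → ℕ)} (hT : ∀ a ∈ T, IsConfig nn c S a) {y : (ι → ℕ) → ℝ}
    (hy : ∀ a ∈ T, 0 ≤ y a ∧ y a ≤ 1) {k : ℕ} {r : ι → ℕ} (hrk : r ≤ k • nn)
    (hr : ∀ i, (r i : ℝ) = ∑ a ∈ T, y a * a i) :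
    ∃ R : Multiset (ι → ℕ), (∀ b ∈ R, IsConfig nn c S b) ∧ R.sum = r ∧
      (R.card : ℝ) ≤ ∑ a ∈ T, y a + (T.card + k) / 2 := by
  have hc0 : ∀ i, 0 ≤ c i := fun i => (hc i).1.le
  have hrT : r ≤ ∑ a ∈ T, a := fun i => by
    have : (r i : ℝ) ≤ ∑ a ∈ T, (a i : ℝ) := (hr i).trans_le <| sum_le_sum fun a ha =>
      mul_le_of_le_one_left (Nat.cast_nonneg _) (hy a ha).2
    rw [Finset.sum_apply]
    exact_mod_cast this
  obtain ⟨R₁, hR₁, hR₁sum, hR₁card⟩ := exists_configs_sum_eq_card_eq hc0 hT hrT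
  obtain ⟨R₂, hR₂, hR₂sum, hR₂card⟩ := exists_configs_sum_eq_card_mul_le hS.le hc k r hrk
  have hsize : configSize c r ≤ S * ∑ a ∈ T, y a := by
    rw [configSize, sum_mul_eq_sum_mul_configSize hr, mul_sum]
    exact sum_le_sum fun a ha => by
      rw [mul_comm S]; exact mul_le_mul_of_nonneg_left (hT a ha).2 (hy a ha).1
  have hR₂le : (R₂.card : ℝ) ≤ 2 * ∑ a ∈ T, y a + k := by
    rw [← mul_le_mul_iff_left₀ hS]
    nlinarith
  rcases le_total R₁.card R₂.card with h | h
  · refine ⟨R₁, hR₁, hR₁sum, ?_⟩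
    have : (R₁.card : ℝ) ≤ R₂.card := by exact_mod_cast h
    rw [hR₁card] at this ⊢
    linarith
  · refine ⟨R₂, hR₂, hR₂sum, ?_⟩
    have : (R₂.card : ℝ) ≤ R₁.card := by exact_mod_cast h
    rw [hR₁card] at this
    linarith

end Residual

section Caratheodory

variable {𝕜 E ι : Type*} [Field 𝕜] [LinearOrder 𝕜] [IsStrictOrderedRing 𝕜] [AddCommGroup E]
  [Module 𝕜 E] {f : ι → E} {T : Finset ι} {x : ι → 𝕜}

/-- Move `x` along the relation `g` until one of its coordinates vanishes; the cost `∑ x` does not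
increase because `∑ g ≥ 0`. -/
theorem exists_erase_sum_smul_eq_of_sum_smul_eq_zero [DecidableEq ι] {g : ι → 𝕜}
    (hg : ∑ i ∈ T, g i • f i = 0) (hgsum : 0 ≤ ∑ i ∈ T, g i) (hgpos : ∃ i ∈ T, 0 < g i)
    (hx : ∀ i ∈ T, 0 ≤ x i) :
    ∃ j ∈ T, ∃ x' : ι → 𝕜, (∀ i ∈ T.erase j, 0 ≤ x' i) ∧
      ∑ i ∈ T.erase j, x' i • f i = ∑ i ∈ T, x i • f i ∧
      ∑ i ∈ T.erase j, x' i ≤ ∑ i ∈ T, x i := by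
  obtain ⟨j, hj, hmin⟩ := exists_min_image ({i ∈ T | 0 < g i}) (fun i => x i / g i)
    (by simpa [Finset.Nonempty] using hgpos)
  simp only [mem_filter, and_imp] at hj hmin
  set t := x j / g j
  have ht : 0 ≤ t := div_nonneg (hx j hj.1) hj.2.le
  have hj0 : x j - t * g j = 0 := by simp [t, div_mul_cancel₀ _ hj.2.ne']
  refine ⟨j, hj.1, fun i => x i - t * g i, fun i hi => ?_, ?_, ?_⟩
  · have hiT := mem_of_mem_erase hi
    rcases lt_or_ge 0 (g i) with hgi | hgi
    · have := (le_div_iff₀ hgi).1 (hmin i hiT hgi)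
      linarith
    · nlinarith [hx i hiT]
  · dsimp only
    rw [sum_erase _ (by rw [hj0, zero_smul])]
    simp_rw [sub_smul, sum_sub_distrib, mul_smul, ← smul_sum, hg, smul_zero, sub_zero]
  · dsimp only
    rw [sum_erase (f := fun i => x i - t * g i) T hj0, sum_sub_distrib, ← mul_sum]
    linarith [mul_nonneg ht hgsum]

theorem exists_pos_of_sum_nonneg {g : ι → 𝕜} (hsum : 0 ≤ ∑ i ∈ T, g i)
    (hne : ∃ i ∈ T, g i ≠ 0) : ∃ i ∈ T, 0 < g i := by
  by_contra! h
  obtain ⟨i, hi, hgi⟩ := hne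
  exact hgi ((sum_eq_zero_iff_of_nonpos h).1 (le_antisymm (sum_nonpos h) hsum) i hi)

/-- Carathéodory's theorem for cones, without increasing the total weight. -/
theorem exists_subset_card_le_finrank_sum_smul_eq [DecidableEq ι] [FiniteDimensional 𝕜 E]
    (hx : ∀ i ∈ T, 0 ≤ x i) :
    ∃ T' ⊆ T, ∃ x' : ι → 𝕜, (∀ i ∈ T', 0 ≤ x' i) ∧ T'.card ≤ Module.finrank 𝕜 E ∧
      ∑ i ∈ T', x' i • f i = ∑ i ∈ T, x i • f i ∧ ∑ i ∈ T', x' i ≤ ∑ i ∈ T, x i := by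
  induction T using Finset.strongInduction generalizing x with
  | H T ih =>
  by_cases hcard : T.card ≤ Module.finrank 𝕜 E
  · exact ⟨T, subset_rfl, x, hx, hcard, rfl, le_rfl⟩
  have hdep : ¬LinearIndepOn 𝕜 f (T : Set ι) := fun hli => hcard <| by
    simpa using hli.fintype_card_le_finrank
  obtain ⟨g, hg, hne⟩ := not_linearIndepOn_finset_iff.1 hdep
  obtain ⟨g', hg', hg'sum, hg'pos⟩ : ∃ g' : ι → 𝕜,
      ∑ i ∈ T, g' i • f i = 0 ∧ 0 ≤ ∑ i ∈ T, g' i ∧ ∃ i ∈ T, 0 < g' i := by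
    rcases le_total 0 (∑ i ∈ T, g i) with hgsum | hgsum
    · exact ⟨g, hg, hgsum, exists_pos_of_sum_nonneg hgsum hne⟩
    · have hgsum' : 0 ≤ ∑ i ∈ T, -g i := by simpa using hgsum
      exact ⟨-g, by simp [neg_smul, hg], hgsum',
        exists_pos_of_sum_nonneg hgsum' (by simpa using hne)⟩
  obtain ⟨j, hj, x', hx', hsum, hval⟩ :=
    exists_erase_sum_smul_eq_of_sum_smul_eq_zero hg' hg'sum hg'pos hx
  obtain ⟨T', hT', x'', hx'', hcard', hsum', hval'⟩ := ih _ (erase_ssubset hj) hx'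
  exact ⟨T', hT'.trans (erase_subset _ _), x'', hx'', hcard', hsum'.trans hsum,
    hval'.trans hval⟩

end Caratheodory

section Fractional

variable {ι : Type*} [Fintype ι] {nn : ι → ℕ} {c : ι → ℝ} {S : ℝ} {k : ℕ}

/-- A feasible solution of the configuration LP, supported on the configurations in `T`. -/
structure IsFracKPacking (nn : ι → ℕ) (c : ι → ℝ) (S : ℝ) (k : ℕ) (T : Finset (ι → ℕ))
    (x : (ι → ℕ) → ℝ) : Prop where
  nonneg : ∀ a ∈ T, 0 ≤ x a
  isConfig : ∀ a ∈ T, IsConfig nn c S a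
  sum_mul_eq : ∀ i, ∑ a ∈ T, x a * a i = k * nn i

namespace IsFracKPacking

variable {T : Finset (ι → ℕ)} {x : (ι → ℕ) → ℝ}

theorem mul_sum_le (hx : IsFracKPacking nn c S k T x) :
    (k : ℝ) * ∑ i, (nn i : ℝ) * c i ≤ S * ∑ a ∈ T, x a := by
  rw [mul_sum]
  simp_rw [← mul_assoc]
  rw [sum_mul_eq_sum_mul_configSize fun i => (hx.sum_mul_eq i).symm, mul_sum]
  exact sum_le_sum fun a ha => by
    rw [mul_comm S]; exact mul_le_mul_of_nonneg_left (hx.isConfig a ha).2 (hx.nonneg a ha)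

theorem exists_card_le [DecidableEq ι] (hx : IsFracKPacking nn c S k T x) :
    ∃ T' x', IsFracKPacking nn c S k T' x' ∧ T'.card ≤ Fintype.card ι ∧
      ∑ a ∈ T', x' a ≤ ∑ a ∈ T, x a := by
  obtain ⟨T', hT', x', hx', hcard, hsum, hval⟩ := exists_subset_card_le_finrank_sum_smul_eq
    (f := fun (a : ι → ℕ) (i : ι) => (a i : ℝ)) hx.nonneg
  rw [Module.finrank_fintype_fun_eq_card] at hcard
  refine ⟨T', x', ⟨hx', fun a ha => hx.isConfig a (hT' ha), fun i => ?_⟩, hcard, hval⟩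
  simpa [Finset.sum_apply, hx.sum_mul_eq] using congrFun hsum i

/-- Rounding down: the integer parts of `x` are whole bins. -/
theorem exists_configs_sum_eq (hS : 0 < S) (hc : ∀ i, 0 < c i ∧ c i ≤ S)
    (hx : IsFracKPacking nn c S k T x) :
    ∃ M : Multiset (ι → ℕ), (∀ b ∈ M, IsConfig nn c S b) ∧ M.sum = k • nn ∧
      (M.card : ℝ) ≤ ∑ a ∈ T, x a + (T.card + k) / 2 := by
  set F : Multiset (ι → ℕ) := ∑ a ∈ T, Multiset.replicate ⌊x a⌋₊ a
  have hFsum : ∀ i, ((F.sum i : ℕ) : ℝ) = ∑ a ∈ T, (⌊x a⌋₊ : ℝ) * a i := by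
    intro i
    simp [F, Multiset.sum_sum, Finset.sum_apply]
  have hFle : F.sum ≤ k • nn := fun i => by
    have : ((F.sum i : ℕ) : ℝ) ≤ ((k • nn) i : ℕ) := by
      rw [hFsum, Pi.smul_apply, smul_eq_mul, Nat.cast_mul, ← hx.sum_mul_eq]
      exact sum_le_sum fun a ha =>
        mul_le_mul_of_nonneg_right (Nat.floor_le (hx.nonneg a ha)) (Nat.cast_nonneg _)
    exact_mod_cast this
  obtain ⟨R, hR, hRsum, hRcard⟩ := exists_configs_sum_eq_card_le hS hc hx.isConfig
    (y := fun a => x a - ⌊x a⌋₊) (r := k • nn - F.sum)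
    (fun a ha => ⟨sub_nonneg.2 (Nat.floor_le (hx.nonneg a ha)),
      by linarith [Nat.lt_floor_add_one (x a)]⟩) tsub_le_self
    (fun i => by
      rw [Pi.sub_apply, Nat.cast_sub (hFle i), hFsum, Pi.smul_apply, smul_eq_mul, Nat.cast_mul,
        ← hx.sum_mul_eq, ← sum_sub_distrib]
      simp_rw [sub_mul])
  refine ⟨F + R, ?_, by rw [Multiset.sum_add, hRsum, add_tsub_cancel_of_le hFle], ?_⟩
  · intro b hb
    rcases Multiset.mem_add.1 hb with hb | hb
    · obtain ⟨a, ha, hba⟩ := Multiset.mem_sum.1 hb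
      exact Multiset.eq_of_mem_replicate hba ▸ hx.isConfig a ha
    · exact hR b hb
  · rw [Multiset.card_add, Nat.cast_add, Multiset.card_sum]
    simp only [Multiset.card_replicate, Nat.cast_sum, sum_sub_distrib] at hRcard ⊢
    linarith

end IsFracKPacking

end Fractional

section Windows

theorem card_filter_mem_image_mod {n a d : ℕ} (hd : d ≤ n) :
    #{p : Fin n | (p : ℕ) ∈ (Ico a (a + d)).image (· % n)} = d := by
  have hinj : Set.InjOn (· % n) (Ico a (a + d)) :=
    (Nat.mod_injOn_Ico a n).mono (coe_subset.2 (Ico_subset_Ico_right (by omega)))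
  have hmap : ({p : Fin n | (p : ℕ) ∈ (Ico a (a + d)).image (· % n)} : Finset (Fin n)).map
      Fin.valEmbedding =
      (Ico a (a + d)).image (· % n) := by
    ext v
    simp only [mem_map, mem_filter, mem_univ, true_and, Fin.valEmbedding_apply]
    refine ⟨fun ⟨p, hp, hpv⟩ => hpv ▸ hp, fun hv => ?_⟩
    obtain ⟨t, ht, rfl⟩ := mem_image.1 hv
    exact ⟨⟨t % n, Nat.mod_lt _ (by rw [mem_Ico] at ht; omega)⟩, hv, rfl⟩
  rw [← card_map, hmap, card_image_of_injOn hinj, Nat.card_Ico, Nat.add_sub_cancel_left]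

theorem sum_range_sum_Ico {M : Type*} [AddCommMonoid M] (f : ℕ → M) {s : ℕ → ℕ}
    (hs : Monotone s) (q : ℕ) :
    ∑ j ∈ range q, ∑ t ∈ Ico (s j) (s (j + 1)), f t = ∑ t ∈ Ico (s 0) (s q), f t := by
  induction q with
  | zero => simp
  | succ q ih =>
    rw [sum_range_succ, ih, sum_Ico_consecutive _ (hs (Nat.zero_le q)) (hs q.le_succ)]

theorem card_filter_range_mem_image_mod {n k p q : ℕ} {s : ℕ → ℕ} (hs : Monotone s)
    (hstep : ∀ j < q, s (j + 1) ≤ s j + n) (h0 : s 0 = 0) (hq : s q = k * n) (hp : p < n) :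
    #{j ∈ range q | p ∈ (Ico (s j) (s (j + 1))).image (· % n)} = k := by
  calc _ = ∑ j ∈ range q, #{t ∈ Ico (s j) (s (j + 1)) | t % n = p} := by
        rw [card_filter]
        refine sum_congr rfl fun j hj => ?_
        have hle : #{t ∈ Ico (s j) (s (j + 1)) | t % n = p} ≤ 1 := by
          refine card_le_one.2 fun t ht t' ht' => ?_
          simp only [mem_filter] at ht ht'
          have hsub : Ico (s j) (s (j + 1)) ⊆ Ico (s j) (s j + n) :=
            Ico_subset_Ico_right (hstep j (mem_range.1 hj))
          exact Nat.mod_injOn_Ico _ n (hsub ht.1) (hsub ht'.1) (ht.2.trans ht'.2.symm)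
        split_ifs with h
        · obtain ⟨t, ht, htp⟩ := mem_image.1 h
          exact le_antisymm (card_pos.2 ⟨t, mem_filter.2 ⟨ht, htp⟩⟩) hle
        · refine (card_eq_zero.2 (filter_eq_empty_iff.2 fun t ht h' => h ?_)).symm
          exact mem_image.2 ⟨t, ht, h'⟩
    _ = #{t ∈ range (k * n) | t % n = p} := by
        simp_rw [card_filter]
        rw [sum_range_sum_Ico _ hs, h0, hq, Nat.Ico_zero_eq_range]
    _ = k := by
        have hn : 0 < n := (Nat.zero_le p).trans_lt hp
        have := Nat.count_modEq_card (k * n) hn p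
        rw [Nat.count_eq_card_filter_range, Nat.mul_mod_left, if_neg (Nat.not_lt_zero _),
          Nat.mul_div_cancel _ hn, add_zero] at this
        simpa [Nat.ModEq, Nat.mod_eq_of_lt hp] using this

end Windows

section Packings

variable {ι : Type*} [DecidableEq ι] {nn : ι → ℕ} {c : ι → ℝ} {S : ℝ} {k : ℕ}

def binConfig (b : Finset ((i : ι) × Fin (nn i))) : ι → ℕ := fun i => #{p | ⟨i, p⟩ ∈ b}

theorem binConfig_le (b : Finset ((i : ι) × Fin (nn i))) : binConfig b ≤ nn := fun i =>
  (card_filter_le _ _).trans (card_fin (nn i)).le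

theorem sum_eq_configSize_binConfig [Fintype ι] (b : Finset ((i : ι) × Fin (nn i))) :
    ∑ it ∈ b, c it.1 = configSize c (binConfig b) := by
  conv_lhs => rw [← univ_inter b, ← sum_ite_mem, Fintype.sum_sigma]
  refine sum_congr rfl fun i _ => ?_
  rw [← sum_filter]
  exact (sum_const (c i)).trans (nsmul_eq_mul _ _)

theorem sum_binConfig_eq {q : ℕ} {B : Fin q → Finset ((i : ι) × Fin (nn i))}
    (hB : ∀ it, #{j | it ∈ B j} = k) : ∑ j, binConfig (B j) = k • nn := by
  funext i
  simp only [Finset.sum_apply, binConfig, card_filter, Pi.smul_apply, smul_eq_mul]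
  rw [sum_comm]
  simp_rw [← card_filter, hB]
  simp [mul_comm]

/-- Lay the `k nn i` copies of size `i` out as `0, 1, …, k nn i - 1`, copy `t` being item
`t % nn i`, and give bin `j` the next `b j i` of them: a window of length at most `nn i` holds
no item twice, and every item is met once in each of the `k` rounds. -/
theorem exists_kPacking_of_sum_range_eq [Fintype ι] {q : ℕ} {b : ℕ → ι → ℕ}
    (hb : ∀ j < q, IsConfig nn c S (b j)) (hsum : ∑ j ∈ range q, b j = k • nn) :
    ∃ B : Fin q → Finset ((i : ι) × Fin (nn i)),
      (∀ j, ∑ it ∈ B j, c it.1 ≤ S) ∧ ∀ it, #{j | it ∈ B j} = k := by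
  set s : ℕ → ι → ℕ := fun j => ∑ j' ∈ range j, b j'
  have hs_succ : ∀ j, s (j + 1) = s j + b j := fun j => sum_range_succ _ _
  have hs_mono : ∀ i, Monotone (s · i) := fun i =>
    monotone_nat_of_le_succ fun j => by simp [hs_succ]
  refine ⟨fun j => {it | (it.2 : ℕ) ∈ (Ico (s j it.1) (s (j + 1) it.1)).image (· % nn it.1)},
    fun j => ?_, fun ⟨i, p⟩ => ?_⟩
  · have hbin : binConfig {it : (i : ι) × Fin (nn i) |
        (it.2 : ℕ) ∈ (Ico (s j it.1) (s (j + 1) it.1)).image (· % nn it.1)} = b j := by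
      funext i
      simp only [binConfig, mem_filter, mem_univ, true_and, hs_succ, Pi.add_apply]
      exact card_filter_mem_image_mod ((hb j j.2).1 i)
    rw [sum_eq_configSize_binConfig, hbin]
    exact (hb j j.2).2
  · simp only [mem_filter, mem_univ, true_and]
    rw [card_filter, Fin.sum_univ_eq_sum_range
      (fun j => if (p : ℕ) ∈ (Ico (s j i) (s (j + 1) i)).image (· % nn i) then 1 else 0),
      ← card_filter]
    refine card_filter_range_mem_image_mod (hs_mono i) (fun j hj => ?_) (by simp [s])
      (by simpa [s] using congrFun hsum i) p.2
    rw [hs_succ]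
    exact Nat.add_le_add_left ((hb j hj).1 i) _

theorem exists_kPacking_of_multiset [Fintype ι] {M : Multiset (ι → ℕ)}
    (hM : ∀ b ∈ M, IsConfig nn c S b) (hsum : M.sum = k • nn) :
    ∃ B : Fin M.card → Finset ((i : ι) × Fin (nn i)),
      (∀ j, ∑ it ∈ B j, c it.1 ≤ S) ∧ ∀ it, #{j | it ∈ B j} = k := by
  refine exists_kPacking_of_sum_range_eq (b := fun j => M.toList.getD j 0) (fun j hj => ?_) ?_
  · rw [← Multiset.length_toList] at hj
    rw [List.getD_eq_getElem _ _ hj]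
    exact hM _ (Multiset.mem_toList.1 (List.getElem_mem hj))
  · rw [← Multiset.length_toList, ← Fin.sum_univ_eq_sum_range, ← hsum, ← Multiset.sum_toList,
      ← Fin.sum_univ_getElem]
    exact sum_congr rfl fun j _ => List.getD_eq_getElem _ _ j.2

theorem exists_isFracKPacking_of_kPacking [Fintype ι] {q : ℕ}
    {B : Fin q → Finset ((i : ι) × Fin (nn i))} (hB₁ : ∀ j, ∑ it ∈ B j, c it.1 ≤ S)
    (hB₂ : ∀ it, #{j | it ∈ B j} = k) :
    ∃ T x, IsFracKPacking nn c S k T x ∧ ∑ a ∈ T, x a = q := by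
  refine ⟨univ.image (binConfig ∘ B), fun a => #{j | binConfig (B j) = a},
    ⟨fun a _ => Nat.cast_nonneg _, ?_, fun i => ?_⟩, ?_⟩
  · simp only [mem_image, mem_univ, true_and, Function.comp_apply, forall_exists_index]
    rintro _ j rfl
    exact ⟨binConfig_le _, sum_eq_configSize_binConfig (B j) ▸ hB₁ j⟩
  · have h := congrFun (sum_binConfig_eq hB₂) i
    rw [Finset.sum_apply] at h
    have hcomp := sum_comp (s := univ) (fun a : ι → ℕ => (a i : ℝ)) (binConfig ∘ B)
    simp only [Function.comp_apply, nsmul_eq_mul] at hcomp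
    rw [← hcomp]
    exact_mod_cast h
  · have := (card_eq_sum_card_image (binConfig ∘ B) univ).symm
    simp only [card_univ, Fintype.card_fin, Function.comp_apply] at this
    exact (Nat.cast_sum _ _).symm.trans (congrArg Nat.cast this)

end Packings

section BinPacking

variable {m : ℕ} {nn : Fin m → ℕ} {c : Fin m → ℝ} {S : ℝ} {k : ℕ}

theorem kOPTSig_le_card {M : Multiset (Fin m → ℕ)} (hM : ∀ b ∈ M, IsConfig nn c S b)
    (hsum : M.sum = k • nn) : kOPTSig m nn c S k ≤ M.card :=
  Nat.sInf_le (exists_kPacking_of_multiset hM hsum)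

theorem exists_kPacking_kOPTSig (hS : 0 ≤ S) (hc : ∀ i, 0 < c i ∧ c i ≤ S) :
    ∃ B : Fin (kOPTSig m nn c S k) → Finset ((i : Fin m) × Fin (nn i)),
      (∀ j, ∑ it ∈ B j, c it.1 ≤ S) ∧ ∀ it, #{j | it ∈ B j} = k := by
  obtain ⟨M, hM, hsum, -⟩ := exists_configs_sum_eq_card_mul_le hS hc k (k • nn) le_rfl
  have hne : ∃ q, ∃ B : Fin q → Finset ((i : Fin m) × Fin (nn i)),
      (∀ j, ∑ it ∈ B j, c it.1 ≤ S) ∧ ∀ it, #{j | it ∈ B j} = k :=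
    ⟨_, exists_kPacking_of_multiset hM hsum⟩
  exact Nat.sInf_mem hne

theorem kOPTSig_le_of_isFracKPacking (hS : 0 < S) (hc : ∀ i, 0 < c i ∧ c i ≤ S)
    {T : Finset (Fin m → ℕ)} {x : (Fin m → ℕ) → ℝ} (hx : IsFracKPacking nn c S k T x) :
    (kOPTSig m nn c S k : ℝ) ≤ ∑ a ∈ T, x a + (m + k) / 2 := by
  obtain ⟨T', x', hx', hcard, hval⟩ := hx.exists_card_le
  obtain ⟨M, hM, hsum, hMcard⟩ := hx'.exists_configs_sum_eq hS hc
  have hcard' : (T'.card : ℝ) ≤ m := by exact_mod_cast (Fintype.card_fin m) ▸ hcard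
  calc (kOPTSig m nn c S k : ℝ) ≤ M.card := by exact_mod_cast kOPTSig_le_card hM hsum
    _ ≤ ∑ a ∈ T', x' a + (T'.card + k) / 2 := hMcard
    _ ≤ ∑ a ∈ T, x a + (m + k) / 2 := by linarith

def kLINSet (m : ℕ) (nn : Fin m → ℕ) (c : Fin m → ℝ) (S : ℝ) (k : ℕ) : Set ℝ :=
  {v : ℝ | ∃ x : (Fin m → ℕ) → ℝ,
    (∀ a, 0 ≤ x a) ∧
    (∀ a, x a ≠ 0 → (∀ i, a i ≤ nn i) ∧ ∑ i, (a i : ℝ) * c i ≤ S) ∧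
    (Function.support x).Finite ∧
    (∀ i, ∑ᶠ a, x a * (a i : ℝ) = (k : ℝ) * (nn i : ℝ)) ∧
    v = ∑ᶠ a, x a}

theorem mem_kLINSet_iff {v : ℝ} :
    v ∈ kLINSet m nn c S k ↔ ∃ T x, IsFracKPacking nn c S k T x ∧ ∑ a ∈ T, x a = v := by
  constructor
  · rintro ⟨x, hx₀, hx₁, hfin, hcol, rfl⟩
    have hsupp : Function.support x ⊆ hfin.toFinset := by simp
    refine ⟨hfin.toFinset, x, ⟨fun a _ => hx₀ a, fun a ha => hx₁ a (by simpa using ha),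
      fun i => ?_⟩, (finsum_eq_sum_of_support_subset _ hsupp).symm⟩
    rw [← hcol i, finsum_eq_sum_of_support_subset _
      ((Function.support_mul_subset_left _ _).trans hsupp)]
  · rintro ⟨T, x, hx, rfl⟩
    classical
    set y : (Fin m → ℕ) → ℝ := fun a => if a ∈ T then x a else 0
    have hsupp : Function.support y ⊆ T := fun a ha => by
      by_contra h
      exact ha (if_neg h)
    refine ⟨y, fun a => ?_, fun a ha => ?_, (T.finite_toSet.subset hsupp), fun i => ?_, ?_⟩
    · by_cases h : a ∈ T
      · simpa [y, h] using hx.nonneg a h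
      · simp [y, h]
    · exact hx.isConfig a (hsupp ha)
    · rw [finsum_eq_sum_of_support_subset _ ((Function.support_mul_subset_left _ _).trans hsupp),
        ← hx.sum_mul_eq i]
      exact sum_congr rfl fun a ha => by simp [y, ha]
    · rw [finsum_eq_sum_of_support_subset _ hsupp]
      exact sum_congr rfl fun a ha => by simp [y, ha]

theorem kLIN_le {T : Finset (Fin m → ℕ)} {x : (Fin m → ℕ) → ℝ}
    (hx : IsFracKPacking nn c S k T x) : kLIN m nn c S k ≤ ∑ a ∈ T, x a := by
  refine csInf_le ⟨0, fun v hv => ?_⟩ (mem_kLINSet_iff.2 ⟨T, x, hx, rfl⟩)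
  obtain ⟨T, x, hx, rfl⟩ := mem_kLINSet_iff.1 hv
  exact sum_nonneg hx.nonneg

theorem le_kLIN {b : ℝ} (hne : ∃ T x, IsFracKPacking nn c S k T x)
    (h : ∀ T x, IsFracKPacking nn c S k T x → b ≤ ∑ a ∈ T, x a) : b ≤ kLIN m nn c S k := by
  obtain ⟨T, x, hx⟩ := hne
  refine le_csInf ⟨_, mem_kLINSet_iff.2 ⟨T, x, hx, rfl⟩⟩ fun v hv => ?_
  obtain ⟨T, x, hx, rfl⟩ := mem_kLINSet_iff.1 hv
  exact h T x hx

end BinPacking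

theorem stmt_18_general (m : ℕ) (S : ℝ) (hS : 0 < S) (c : Fin m → ℝ)
    (hc : ∀ i, 0 < c i ∧ c i ≤ S)
    (nn : Fin m → ℕ) (k : ℕ) :
    (k : ℝ) * ∑ i, (nn i : ℝ) * c i ≤ S * kLIN m nn c S k ∧
    S * kLIN m nn c S k ≤ S * (kOPTSig m nn c S k : ℝ) ∧
    S * (kOPTSig m nn c S k : ℝ) ≤ S * kLIN m nn c S k + S * ((m : ℝ) + k) / 2 := by
  obtain ⟨B, hB₁, hB₂⟩ := exists_kPacking_kOPTSig (nn := nn) (k := k) hS.le hc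
  obtain ⟨T, x, hx, hval⟩ := exists_isFracKPacking_of_kPacking hB₁ hB₂
  have hvolume : (k : ℝ) * (∑ i, (nn i : ℝ) * c i) / S ≤ kLIN m nn c S k :=
    le_kLIN ⟨T, x, hx⟩ fun _ _ hx => (div_le_iff₀' hS).2 hx.mul_sum_le
  have hround : (kOPTSig m nn c S k : ℝ) - (m + k) / 2 ≤ kLIN m nn c S k :=
    le_kLIN ⟨T, x, hx⟩ fun _ _ hx => sub_le_iff_le_add.2 (kOPTSig_le_of_isFracKPacking hS hc hx)
  refine ⟨?_, mul_le_mul_of_nonneg_left (hval ▸ kLIN_le hx) hS.le, ?_⟩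
  · exact (div_le_iff₀' hS).1 hvolume
  · nlinarith

/-- For distinct sizes `c i ∈ (0,S]` with multiplicities `nn i ≥ 1`
and `k ≥ 1`:
`V(D_k) ≤ S·LIN(D_k) ≤ S·OPT(D_k) ≤ S·LIN(D_k) + S·(m + k)/2`,
where `V(D_k) = k·∑ nn i · c i`. -/
theorem stmt_18 (m : ℕ) (S : ℝ) (hS : 0 < S) (c : Fin m → ℝ)
    (hc : ∀ i, 0 < c i ∧ c i ≤ S) (hcinj : Function.Injective c)
    (nn : Fin m → ℕ) (hnn : ∀ i, 1 ≤ nn i) (k : ℕ) (hk : 1 ≤ k) :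
    (k : ℝ) * ∑ i, (nn i : ℝ) * c i ≤ S * kLIN m nn c S k ∧
    S * kLIN m nn c S k ≤ S * (kOPTSig m nn c S k : ℝ) ∧
    S * (kOPTSig m nn c S k : ℝ) ≤ S * kLIN m nn c S k + S * ((m : ℝ) + k) / 2 :=
  stmt_18_general m S hS c hc nn k
end
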